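/- arXiv:1103.1270 — 8 statements merged into one kernel-verified Lean document; each statement's English description precedes it below -/
import Mathlib

section
/- Let p > 1 and let f : (0,∞) → ℝ be nonnegative and measurable, not a.e. zero, with x ↦ x f(x) in L^p(0,∞). Then ∫₀^∞ (∫ₓ^∞ f(t) dt)^p dx < p^p ∫₀^∞ (x f(x))^p dx. -/
open MeasureTheory Set
open scoped ENNReal


/-- Equality case in Young's inequality. -/
lemma young_eq {p q a b : ℝ} (hpq : p.HolderConjugate q) (ha : 0 ≤ a) (hb : 0 ≤ b)
    (h : a * b = a ^ p / p + b ^ q / q) : a ^ p = b ^ q := by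
  rcases eq_or_lt_of_le hb with hb0 | hbpos
  · have hq : (0:ℝ) ^ q = 0 := Real.zero_rpow hpq.symm.ne_zero
    rw [← hb0] at h ⊢
    rw [hq]
    rw [hq, mul_zero, zero_div, add_zero] at h
    have hap : 0 ≤ a ^ p := Real.rpow_nonneg ha p
    have hdiv : a ^ p / p = 0 := h.symm
    have := hpq.pos
    rcases div_eq_zero_iff.1 hdiv with h' | h'
    · exact h'
    · exact absurd h' this.ne'
  · set a₀ := b ^ (q - 1) with ha₀def
    have ha₀nn : 0 ≤ a₀ := Real.rpow_nonneg hb _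
    have ha₀p : a₀ ^ p = b ^ q := by
      rw [ha₀def, ← Real.rpow_mul hb, hpq.symm.sub_one_mul_conj]
    have ha₀b : a₀ * b = b ^ q := by
      rw [ha₀def]
      nth_rewrite 2 [show b = b ^ (1:ℝ) from (Real.rpow_one b).symm]
      rw [← Real.rpow_add hbpos]
      ring_nf
    have hφa₀ : a₀ * b = a₀ ^ p / p + b ^ q / q := by
      rw [ha₀p, ha₀b]
      have h1 : p⁻¹ + q⁻¹ = 1 := hpq.inv_add_inv_eq_one
      have h2 : b ^ q / p + b ^ q / q = b ^ q * (p⁻¹ + q⁻¹) := by ring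
      rw [h2, h1, mul_one]
    by_cases haa : a = a₀
    · rw [haa, ha₀p]
    · exfalso
      set m := (1/2 : ℝ) * a + (1/2 : ℝ) * a₀ with hm
      have hmp : m ^ p < (1/2) * a ^ p + (1/2) * a₀ ^ p :=
        (strictConvexOn_rpow hpq.lt).2 (mem_Ici.2 ha) (mem_Ici.2 ha₀nn) haa
          (by norm_num) (by norm_num) (by norm_num)
      have hyoung : m * b ≤ m ^ p / p + b ^ q / q :=
        Real.young_inequality_of_nonneg (by positivity) hb hpq
      have hlt : m ^ p / p + b ^ q / q < m * b := by
        have hp := hpq.pos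
        have h2 : m ^ p / p < ((1/2) * a ^ p + (1/2) * a₀ ^ p) / p := by gcongr
        have h3 : ((1/2) * a ^ p + (1/2) * a₀ ^ p) / p = (1/2)*(a ^ p / p) + (1/2)*(a₀ ^ p/p) := by
          ring
        have hmb : m * b = 1/2*(a*b) + 1/2*(a₀*b) := by rw [hm]; ring
        linarith [h2, h, hφa₀, hmb]
      exact absurd hyoung (not_le.2 hlt)

lemma lint_Ioi_rpow {a c : ℝ} (ha : a < -1) (hc : 0 < c) :
    ∫⁻ t in Ioi c, ENNReal.ofReal (t ^ a) = ENNReal.ofReal (-c ^ (a+1) / (a+1)) := by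
  rw [← ofReal_integral_eq_lintegral_ofReal (integrableOn_Ioi_rpow_of_lt ha hc) ?_,
      integral_Ioi_rpow_of_lt ha hc]
  filter_upwards [ae_restrict_mem measurableSet_Ioi] with t ht
  exact Real.rpow_nonneg (hc.trans ht).le a

lemma lint_Ioo_rpow {a t : ℝ} (ha : -1 < a) (ht : 0 < t) :
    ∫⁻ x in Ioo 0 t, ENNReal.ofReal (x ^ a) = ENNReal.ofReal (t ^ (a+1) / (a+1)) := by
  rw [setLIntegral_congr Ioo_ae_eq_Ioc]
  have hInt : IntegrableOn (fun x : ℝ => x ^ a) (Ioc 0 t) := by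
    rw [← intervalIntegrable_iff_integrableOn_Ioc_of_le ht.le]
    exact intervalIntegral.intervalIntegrable_rpow' ha
  rw [← ofReal_integral_eq_lintegral_ofReal hInt ?_]
  · congr 1
    rw [← intervalIntegral.integral_of_le ht.le, integral_rpow (Or.inl ha),
      Real.zero_rpow (by linarith), sub_zero]
  · filter_upwards [ae_restrict_mem measurableSet_Ioc] with x hx
    exact Real.rpow_nonneg hx.1.le a

lemma lint_swap (k g : ℝ → ℝ≥0∞) (hk : Measurable k) (hg : Measurable g) :
    ∫⁻ x in Ioi (0:ℝ), k x * ∫⁻ t in Ioi x, g t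
      = ∫⁻ t in Ioi (0:ℝ), g t * ∫⁻ x in Ioo 0 t, k x := by
  have hmeas : Measurable (Function.uncurry fun x t =>
      {z : ℝ × ℝ | z.1 < z.2}.indicator (fun z => k z.1 * g z.2) (x, t)) := by
    apply Measurable.indicator
    · exact (hk.comp measurable_fst).mul (hg.comp measurable_snd)
    · exact measurableSet_lt measurable_fst measurable_snd
  have hswap := lintegral_lintegral_swap (μ := volume.restrict (Ioi (0:ℝ)))
    (ν := volume.restrict (Ioi (0:ℝ))) hmeas.aemeasurable
  calc ∫⁻ x in Ioi (0:ℝ), k x * ∫⁻ t in Ioi x, g t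
      = ∫⁻ x in Ioi (0:ℝ), ∫⁻ t in Ioi (0:ℝ),
          {z : ℝ × ℝ | z.1 < z.2}.indicator (fun z => k z.1 * g z.2) (x, t) := by
        apply setLIntegral_congr_fun measurableSet_Ioi
        intro x hx
        have : ∀ t : ℝ, {z : ℝ × ℝ | z.1 < z.2}.indicator (fun z => k z.1 * g z.2) (x, t)
            = (Ioi x).indicator (fun t => k x * g t) t := by
          intro t
          by_cases h : x < t <;> simp [Set.indicator, h]
        simp_rw [this]
        rw [lintegral_indicator measurableSet_Ioi, Measure.restrict_restrict measurableSet_Ioi,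
          Set.Ioi_inter_Ioi, sup_of_le_left (le_of_lt hx), lintegral_const_mul _ hg]
    _ = ∫⁻ t in Ioi (0:ℝ), ∫⁻ x in Ioi (0:ℝ),
          {z : ℝ × ℝ | z.1 < z.2}.indicator (fun z => k z.1 * g z.2) (x, t) := hswap
    _ = ∫⁻ t in Ioi (0:ℝ), g t * ∫⁻ x in Ioo 0 t, k x := by
        apply setLIntegral_congr_fun measurableSet_Ioi
        intro t ht
        have : ∀ x : ℝ, {z : ℝ × ℝ | z.1 < z.2}.indicator (fun z => k z.1 * g z.2) (x, t)
            = (Iio t).indicator (fun x => k x * g t) x := by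
          intro x
          by_cases h : x < t <;> simp [Set.indicator, h]
        simp_rw [this]
        rw [lintegral_indicator measurableSet_Iio, Measure.restrict_restrict measurableSet_Iio]
        have h2 : Iio t ∩ Ioi 0 = Ioo 0 t := by ext y; simp [mem_Ioo, and_comm]
        rw [h2, lintegral_mul_const _ hk]
        ring



lemma measurable_rpow_const'' (c : ℝ) : Measurable fun x : ℝ => x ^ c :=
  measurable_of_measurable_on_compl_singleton 0
    (Continuous.measurable <| continuousOn_iff_continuous_restrict.1 <|
      fun x hx => (Real.continuousAt_rpow_const x c (Or.inl hx)).continuousWithinAt)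

/-- The dual Hardy operator `H*f(x) = ∫ₓ^∞ f(t) dt`. -/
noncomputable def dualHardyOp (f : ℝ → ℝ) (x : ℝ) : ℝ := ∫ t in Ioi x, f t

theorem dual_hardy_integral_inequality (p : ℝ) (hp : 1 < p) (f : ℝ → ℝ)
    (hmeas : Measurable f)
    (hnonneg : ∀ x ∈ Ioi (0:ℝ), 0 ≤ f x)
    (hne : ¬ (f =ᵐ[volume.restrict (Ioi (0:ℝ))] 0))
    (hLp : MemLp (fun x => x * f x) (ENNReal.ofReal p) (volume.restrict (Ioi (0:ℝ)))) :
    ∫ x in Ioi (0:ℝ), (dualHardyOp f x) ^ p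
      < p ^ p * ∫ x in Ioi (0:ℝ), (x * f x) ^ p := by
  have hp0 : (0:ℝ) < p := lt_trans one_pos hp
  have hp0' : (0:ℝ) ≤ p := hp0.le
  set q : ℝ := p / (p - 1) with hqdef
  have hpq : p.HolderConjugate q := Real.HolderConjugate.conjExponent hp
  have hq1 : 1 < q := hpq.symm.lt
  have hq0 : (0:ℝ) < q := hpq.symm.pos
  -- exponents
  set e1 : ℝ := -(p^2)⁻¹ with he1def
  set e2 : ℝ := (p^2)⁻¹ - 1 with he2def
  have he1p : e1 * p = -p⁻¹ := by
    rw [he1def]; field_simp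
  have he12 : e1 + e2 = -1 := by rw [he1def, he2def]; ring
  have hp1 : p - 1 ≠ 0 := sub_ne_zero.2 hp.ne'
  have he2q : e2 * q = -1 - p⁻¹ := by
    rw [he2def, hqdef]; field_simp; ring
  -- main ENNReal functions
  set G : ℝ → ℝ≥0∞ := fun t => ENNReal.ofReal (t * f t) ^ p with hGdef
  have hGmeas : Measurable G :=
    ENNReal.continuous_rpow_const.measurable.comp (measurable_id.mul hmeas).ennreal_ofReal
  set u : ℝ → ℝ≥0∞ := fun t => ENNReal.ofReal (t * f t) * ENNReal.ofReal (t ^ e1) with hudef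
  set v : ℝ → ℝ≥0∞ := fun t => ENNReal.ofReal (t ^ e2) with hvdef
  have humeas : Measurable u := (measurable_id.mul hmeas).ennreal_ofReal.mul
    (measurable_rpow_const'' e1).ennreal_ofReal
  have hvmeas : Measurable v := (measurable_rpow_const'' e2).ennreal_ofReal

  set μ0 := volume.restrict (Ioi (0:ℝ)) with hμ0
  -- pointwise identities
  have huv_t : ∀ t ∈ Ioi (0:ℝ), u t * v t = ENNReal.ofReal (f t) := by
    intro t ht
    have ht0 : (0:ℝ) < t := ht
    simp only [hudef, hvdef]
    rw [mul_assoc, ← ENNReal.ofReal_mul (Real.rpow_nonneg ht0.le e1),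
        ← Real.rpow_add ht0, he12,
        ← ENNReal.ofReal_mul (mul_nonneg ht0.le (hnonneg t ht)), Real.rpow_neg_one]
    congr 1
    rw [mul_comm t (f t), mul_assoc, mul_inv_cancel₀ ht0.ne', mul_one]
  have hup_t : ∀ t ∈ Ioi (0:ℝ), u t ^ p = G t * ENNReal.ofReal (t ^ (-p⁻¹)) := by
    intro t ht
    have ht0 : (0:ℝ) < t := ht
    simp only [hudef, hGdef]
    rw [ENNReal.mul_rpow_of_nonneg _ _ hp0',
        ENNReal.ofReal_rpow_of_nonneg (Real.rpow_nonneg ht0.le e1) hp0',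
        ← Real.rpow_mul ht0.le, he1p]
  have hvq_t : ∀ t ∈ Ioi (0:ℝ), v t ^ q = ENNReal.ofReal (t ^ (-1 - p⁻¹)) := by
    intro t ht
    have ht0 : (0:ℝ) < t := ht
    simp only [hvdef]
    rw [ENNReal.ofReal_rpow_of_nonneg (Real.rpow_nonneg ht0.le e2) hq0.le,
        ← Real.rpow_mul ht0.le, he2q]
  -- B' is finite
  set B' : ℝ≥0∞ := ∫⁻ t in Ioi (0:ℝ), G t with hB'def
  have hB'top : B' ≠ ⊤ := by
    have h0 : (ENNReal.ofReal p) ≠ 0 := by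
      simp only [ne_eq, ENNReal.ofReal_eq_zero, not_le]; exact hp0
    have h1 := hLp.eLpNorm_ne_top
    rw [eLpNorm_eq_lintegral_rpow_enorm_toReal h0 ENNReal.ofReal_ne_top,
        ENNReal.toReal_ofReal hp0'] at h1
    have h2 : (∫⁻ x in Ioi (0:ℝ), ‖x * f x‖ₑ ^ p) ≠ ⊤ := by
      intro hI
      rw [hμ0, hI, ENNReal.top_rpow_of_pos (by positivity)] at h1
      exact h1 rfl
    have h3 : B' = ∫⁻ x in Ioi (0:ℝ), ‖x * f x‖ₑ ^ p := by
      apply setLIntegral_congr_fun measurableSet_Ioi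
      intro x hx
      beta_reduce
      rw [Real.enorm_eq_ofReal (mul_nonneg (le_of_lt hx) (hnonneg x hx))]
    rw [h3]; exact h2
  -- the weighted integral W
  set W : ℝ → ℝ≥0∞ := fun x => ∫⁻ t in Ioi x, G t * ENNReal.ofReal (t ^ (-p⁻¹)) with hWdef
  have hWu : ∀ x : ℝ, 0 < x → ∫⁻ t in Ioi x, u t ^ p = W x := by
    intro x hx
    apply setLIntegral_congr_fun measurableSet_Ioi
    intro t ht
    exact hup_t t (hx.trans ht)
  have hneginv : -p⁻¹ ≤ 0 := neg_nonpos.2 (inv_nonneg.2 hp0')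
  have hWle : ∀ x : ℝ, 0 < x → W x ≤ ENNReal.ofReal (x ^ (-p⁻¹)) * B' := by
    intro x hx
    calc W x ≤ ∫⁻ t in Ioi x, ENNReal.ofReal (x ^ (-p⁻¹)) * G t := by
          apply lintegral_mono_ae
          filter_upwards [ae_restrict_mem measurableSet_Ioi] with t ht
          rw [mul_comm]
          exact mul_le_mul_left
            (ENNReal.ofReal_le_ofReal
              (Real.rpow_le_rpow_of_nonpos hx (le_of_lt ht) hneginv)) _
      _ = ENNReal.ofReal (x ^ (-p⁻¹)) * ∫⁻ t in Ioi x, G t := lintegral_const_mul _ hGmeas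
      _ ≤ ENNReal.ofReal (x ^ (-p⁻¹)) * B' := by
          exact mul_le_mul_right (lintegral_mono_set (Ioi_subset_Ioi hx.le)) _
  have hWtop : ∀ x : ℝ, 0 < x → W x ≠ ⊤ := fun x hx =>
    ne_top_of_le_ne_top (ENNReal.mul_ne_top ENNReal.ofReal_ne_top hB'top) (hWle x hx)
  -- value of the v-integral
  have hVint : ∀ x : ℝ, 0 < x →
      ∫⁻ t in Ioi x, v t ^ q = ENNReal.ofReal (p * x ^ (-p⁻¹)) := by
    intro x hx
    rw [setLIntegral_congr_fun measurableSet_Ioi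
      (by intro t ht; exact hvq_t t (hx.trans ht)),
      lint_Ioi_rpow (by linarith [inv_pos.2 hp0] : -1 - p⁻¹ < -1) hx]
    congr 1
    have h2 : -1 - p⁻¹ + 1 = -p⁻¹ := by ring
    rw [h2]
    field_simp
    all_goals ring
  have hVne0 : ∀ x : ℝ, 0 < x → ENNReal.ofReal (p * x ^ (-p⁻¹)) ≠ 0 := by
    intro x hx
    simp only [ne_eq, ENNReal.ofReal_eq_zero, not_le]
    positivity
  -- Hoelder
  have hHolder : ∀ x : ℝ, 0 < x →
      ∫⁻ t in Ioi x, ENNReal.ofReal (f t)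
        ≤ (∫⁻ t in Ioi x, u t ^ p) ^ (1/p) * (∫⁻ t in Ioi x, v t ^ q) ^ (1/q) := by
    intro x hx
    have h := ENNReal.lintegral_mul_le_Lp_mul_Lq (volume.restrict (Ioi x)) hpq
      humeas.aemeasurable hvmeas.aemeasurable
    refine le_trans (le_of_eq ?_) h
    apply setLIntegral_congr_fun measurableSet_Ioi
    intro t ht
    exact (huv_t t (hx.trans ht)).symm
  -- integrability of f on (x, ∞)
  have hlint_fin : ∀ x : ℝ, 0 < x → (∫⁻ t in Ioi x, ENNReal.ofReal (f t)) ≠ ⊤ := by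
    intro x hx
    have h1 := hHolder x hx
    rw [hWu x hx, hVint x hx] at h1
    exact ne_top_of_le_ne_top
      (ENNReal.mul_ne_top
        (ENNReal.rpow_ne_top_of_nonneg (by positivity) (hWtop x hx))
        (ENNReal.rpow_ne_top_of_nonneg (by positivity) ENNReal.ofReal_ne_top)) h1
  have hfint : ∀ x : ℝ, 0 < x → IntegrableOn f (Ioi x) := by
    intro x hx
    refine ⟨hmeas.aestronglyMeasurable, ?_⟩
    rw [hasFiniteIntegral_iff_ofReal ?nn]
    · exact lt_top_iff_ne_top.2 (hlint_fin x hx)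
    case nn =>
      filter_upwards [ae_restrict_mem measurableSet_Ioi] with t ht
      exact hnonneg t (hx.trans ht)
  have hFrepr : ∀ x : ℝ, 0 < x →
      ENNReal.ofReal (dualHardyOp f x) = ∫⁻ t in Ioi x, ENNReal.ofReal (f t) := by
    intro x hx
    exact ofReal_integral_eq_lintegral_ofReal (hfint x hx)
      (by filter_upwards [ae_restrict_mem measurableSet_Ioi] with t ht
          exact hnonneg t (hx.trans ht))
  have hFnn : ∀ x : ℝ, 0 < x → 0 ≤ dualHardyOp f x := fun x hx =>
    setIntegral_nonneg measurableSet_Ioi (fun t ht => hnonneg t (hx.trans ht))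
  -- the majorant c1
  set c1 : ℝ → ℝ≥0∞ := fun x => ENNReal.ofReal (p ^ (p-1) * x ^ (p⁻¹ - 1)) with hc1def
  have hc1meas : Measurable c1 :=
    ((measurable_rpow_const'' (p⁻¹ - 1)).const_mul _).ennreal_ofReal
  have hp1' : (0:ℝ) ≤ p - 1 := by linarith
  have hpow : ∀ x : ℝ, 0 < x →
      ((W x) ^ (1/p) * (ENNReal.ofReal (p * x ^ (-p⁻¹))) ^ (1/q)) ^ p = W x * c1 x := by
    intro x hx
    rw [ENNReal.mul_rpow_of_nonneg _ _ hp0', ← ENNReal.rpow_mul, ← ENNReal.rpow_mul,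
        one_div, inv_mul_cancel₀ hp0.ne', ENNReal.rpow_one]
    congr 1
    have h1 : 1/q * p = p - 1 := by
      rw [one_div, mul_comm, ← div_eq_mul_inv]
      exact hpq.div_conj_eq_sub_one
    rw [h1, ENNReal.ofReal_rpow_of_nonneg (by positivity) hp1',
        Real.mul_rpow hp0' (Real.rpow_nonneg hx.le _), ← Real.rpow_mul hx.le]
    congr 2
    field_simp
    all_goals ring
  have hkey1 : ∀ x : ℝ, 0 < x →
      ENNReal.ofReal (dualHardyOp f x) ^ p ≤ W x * c1 x := by
    intro x hx
    have h1 := hHolder x hx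
    rw [hWu x hx, hVint x hx, ← hFrepr x hx] at h1
    calc ENNReal.ofReal (dualHardyOp f x) ^ p
        ≤ ((W x) ^ (1/p) * (ENNReal.ofReal (p * x ^ (-p⁻¹))) ^ (1/q)) ^ p :=
          ENNReal.rpow_le_rpow h1 hp0'
      _ = W x * c1 x := hpow x hx
  have hkey1' : ∀ x : ℝ, 0 < x →
      ENNReal.ofReal (dualHardyOp f x) ^ p = W x * c1 x →
      ENNReal.ofReal (dualHardyOp f x)
        = (W x) ^ (1/p) * (ENNReal.ofReal (p * x ^ (-p⁻¹))) ^ (1/q) := by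
    intro x hx heq
    have h2 := heq.trans (hpow x hx).symm
    have h3 := congrArg (fun z : ℝ≥0∞ => z ^ p⁻¹) h2
    simpa only [← ENNReal.rpow_mul, mul_inv_cancel₀ hp0.ne', ENNReal.rpow_one] using h3
  -- Tonelli computation
  have hTon : ∫⁻ x in Ioi (0:ℝ), c1 x * W x = ENNReal.ofReal (p ^ p) * B' := by
    rw [lint_swap c1 (fun t => G t * ENNReal.ofReal (t ^ (-p⁻¹))) hc1meas
      (hGmeas.mul (measurable_rpow_const'' _).ennreal_ofReal)]
    have hin : ∀ t ∈ Ioi (0:ℝ),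
        (∫⁻ x in Ioo 0 t, c1 x) = ENNReal.ofReal (p ^ p * t ^ (p⁻¹)) := by
      intro t ht
      have h1 : ∀ x : ℝ, c1 x
          = ENNReal.ofReal (p ^ (p-1)) * ENNReal.ofReal (x ^ (p⁻¹ - 1)) := by
        intro x
        rw [hc1def, ← ENNReal.ofReal_mul (by positivity)]
      simp_rw [h1]
      rw [lintegral_const_mul _ (measurable_rpow_const'' _).ennreal_ofReal,
          lint_Ioo_rpow (by simp [inv_pos.2 hp0] : (-1:ℝ) < p⁻¹ - 1) ht,
          ← ENNReal.ofReal_mul (by positivity)]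
      congr 1
      have h2 : p⁻¹ - 1 + 1 = p⁻¹ := by ring
      rw [h2]
      have h3 : p ^ p = p ^ (p-1) * p := by
        rw [← Real.rpow_add_one hp0.ne' (p-1)]
        norm_num
      rw [h3]
      field_simp
      all_goals ring
    rw [setLIntegral_congr_fun measurableSet_Ioi
      (by intro t ht; beta_reduce; rw [hin t ht])]
    rw [← lintegral_const_mul _ hGmeas]
    apply setLIntegral_congr_fun measurableSet_Ioi
    intro t ht
    have h4 : ENNReal.ofReal (t ^ (-p⁻¹)) * ENNReal.ofReal (t ^ (p⁻¹)) = 1 := by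
      rw [← ENNReal.ofReal_mul (Real.rpow_nonneg (le_of_lt ht) _),
          ← Real.rpow_add ht, neg_add_cancel, Real.rpow_zero, ENNReal.ofReal_one]
    beta_reduce
    rw [ENNReal.ofReal_mul (by positivity : (0:ℝ) ≤ p ^ p)]
    calc G t * ENNReal.ofReal (t ^ (-p⁻¹))
          * (ENNReal.ofReal (p ^ p) * ENNReal.ofReal (t ^ (p⁻¹)))
        = ENNReal.ofReal (p ^ p) * G t
            * (ENNReal.ofReal (t ^ (-p⁻¹)) * ENNReal.ofReal (t ^ (p⁻¹))) := by ring
      _ = ENNReal.ofReal (p ^ p) * G t := by rw [h4, mul_one]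
  -- main chain
  set A' : ℝ≥0∞ := ∫⁻ x in Ioi (0:ℝ), ENNReal.ofReal (dualHardyOp f x) ^ p with hA'def
  have hA'le : A' ≤ ENNReal.ofReal (p ^ p) * B' := by
    rw [← hTon]
    apply lintegral_mono_ae
    filter_upwards [ae_restrict_mem measurableSet_Ioi] with x hx
    rw [mul_comm (c1 x) (W x)]
    exact hkey1 x hx
  have hRtop : ENNReal.ofReal (p ^ p) * B' ≠ ⊤ :=
    ENNReal.mul_ne_top ENNReal.ofReal_ne_top hB'top
  -- strictness: rule out equality
  have key2 : ∀ x₀ : ℝ, 0 < x₀ →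
      ENNReal.ofReal (dualHardyOp f x₀) ^ p = W x₀ * c1 x₀ →
      ∀ᵐ t ∂(volume.restrict (Ioi x₀)), f t = 0 := by
    intro x₀ hx₀ heq
    set V : ℝ≥0∞ := ENNReal.ofReal (p * x₀ ^ (-p⁻¹)) with hVdef
    have hV0 : V ≠ 0 := hVne0 x₀ hx₀
    have hVtop : V ≠ ⊤ := ENNReal.ofReal_ne_top
    have hUtop : W x₀ ≠ ⊤ := hWtop x₀ hx₀
    have humeasp : Measurable fun t => u t ^ p :=
      ENNReal.continuous_rpow_const.measurable.comp humeas
    have hvmeasq : Measurable fun t => v t ^ q :=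
      ENNReal.continuous_rpow_const.measurable.comp hvmeas
    by_cases hU0 : W x₀ = 0
    · have h1 : ∫⁻ t in Ioi x₀, u t ^ p = 0 := by rw [hWu x₀ hx₀, hU0]
      rw [lintegral_eq_zero_iff humeasp] at h1
      filter_upwards [h1, ae_restrict_mem measurableSet_Ioi] with t ht1 ht2
      have ht0 : (0:ℝ) < t := hx₀.trans ht2
      have h2 : u t = 0 := by
        have ht1' : u t ^ p = 0 := ht1
        rcases ENNReal.rpow_eq_zero_iff.1 ht1' with ⟨h, _⟩ | ⟨_, hy⟩
        · exact h
        · linarith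
      have h3 : ENNReal.ofReal (t * f t) = 0 := by
        rcases mul_eq_zero.1 h2 with h | h
        · exact h
        · exfalso
          rw [ENNReal.ofReal_eq_zero] at h
          exact absurd h (not_le.2 (Real.rpow_pos_of_pos ht0 e1))
      rw [ENNReal.ofReal_eq_zero] at h3
      have h4 : f t ≤ 0 := by nlinarith [hnonneg t ht0]
      exact le_antisymm h4 (hnonneg t ht0)
    · -- Hoelder equality case
      have hFeqH := hkey1' x₀ hx₀ heq
      set al : ℝ≥0∞ := (W x₀) ^ (1/p) with hal
      set be : ℝ≥0∞ := V ^ (1/q) with hbe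
      have hal0 : al ≠ 0 :=
        (ENNReal.rpow_pos (pos_iff_ne_zero.2 hU0) hUtop).ne'
      have haltop : al ≠ ⊤ := ENNReal.rpow_ne_top_of_nonneg (by positivity) hUtop
      have hbe0 : be ≠ 0 := (ENNReal.rpow_pos (pos_iff_ne_zero.2 hV0) hVtop).ne'
      have hbetop : be ≠ ⊤ := ENNReal.rpow_ne_top_of_nonneg (by positivity) hVtop
      set Gn : ℝ → ℝ≥0∞ := fun t => u t * al⁻¹ with hGn
      set Hn : ℝ → ℝ≥0∞ := fun t => v t * be⁻¹ with hHn
      have hGnmeas : Measurable Gn := humeas.mul_const _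
      have hHnmeas : Measurable Hn := hvmeas.mul_const _
      have halp : al ^ p = W x₀ := by
        rw [hal, ← ENNReal.rpow_mul, one_div, inv_mul_cancel₀ hp0.ne', ENNReal.rpow_one]
      have hbeq : be ^ q = V := by
        rw [hbe, ← ENNReal.rpow_mul, one_div, inv_mul_cancel₀ hq0.ne', ENNReal.rpow_one]
      have hGnp : ∀ t, Gn t ^ p = u t ^ p * (W x₀)⁻¹ := by
        intro t
        rw [hGn]
        simp only
        rw [ENNReal.mul_rpow_of_nonneg _ _ hp0', ENNReal.inv_rpow, halp]
      have hHnq : ∀ t, Hn t ^ q = v t ^ q * V⁻¹ := by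
        intro t
        rw [hHn]
        simp only
        rw [ENNReal.mul_rpow_of_nonneg _ _ hq0.le, ENNReal.inv_rpow, hbeq]
      have hIGnp : ∫⁻ t in Ioi x₀, Gn t ^ p = 1 := by
        simp_rw [hGnp]
        rw [lintegral_mul_const' _ _ (by simp [hU0] : (W x₀)⁻¹ ≠ ⊤), hWu x₀ hx₀,
          ENNReal.mul_inv_cancel hU0 hUtop]
      have hIHnq : ∫⁻ t in Ioi x₀, Hn t ^ q = 1 := by
        simp_rw [hHnq]
        rw [lintegral_mul_const' _ _ (by simp [hV0] : V⁻¹ ≠ ⊤), hVint x₀ hx₀,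
          ENNReal.mul_inv_cancel hV0 hVtop]
      have hIGH : ∫⁻ t in Ioi x₀, Gn t * Hn t = 1 := by
        have h1 : ∀ t, Gn t * Hn t = u t * v t * (al⁻¹ * be⁻¹) := by
          intro t; rw [hGn, hHn]; simp only; ring
        simp_rw [h1]
        rw [lintegral_mul_const' _ _
          (ENNReal.mul_ne_top (by simp [hal0]) (by simp [hbe0]))]
        rw [setLIntegral_congr_fun measurableSet_Ioi
          (by intro t ht; exact huv_t t (hx₀.trans ht)),
          ← hFrepr x₀ hx₀, hFeqH]
        rw [show al * be * (al⁻¹ * be⁻¹) = (al * al⁻¹) * (be * be⁻¹) from by ring,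
          ENNReal.mul_inv_cancel hal0 haltop, ENNReal.mul_inv_cancel hbe0 hbetop, one_mul]
      have hyoung_pt : ∀ t, Gn t * Hn t
          ≤ Gn t ^ p / ENNReal.ofReal p + Hn t ^ q / ENNReal.ofReal q :=
        fun t => ENNReal.young_inequality _ _ hpq
      have hmeasRHS : Measurable fun t =>
          Gn t ^ p / ENNReal.ofReal p + Hn t ^ q / ENNReal.ofReal q := by
        apply Measurable.add
        · exact (ENNReal.continuous_rpow_const.measurable.comp hGnmeas).div_const _
        · exact (ENNReal.continuous_rpow_const.measurable.comp hHnmeas).div_const _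

      have hmGnp : Measurable fun t => Gn t ^ p :=
        ENNReal.continuous_rpow_const.measurable.comp hGnmeas
      have hmHnq : Measurable fun t => Hn t ^ q :=
        ENNReal.continuous_rpow_const.measurable.comp hHnmeas
      have hIRHS : ∫⁻ t in Ioi x₀,
          (Gn t ^ p / ENNReal.ofReal p + Hn t ^ q / ENNReal.ofReal q) = 1 := by
        rw [lintegral_add_left (hmGnp.div_const _)]
        simp_rw [div_eq_mul_inv]
        rw [lintegral_mul_const' _ _ (by simp [ENNReal.ofReal_eq_zero, not_le, hp0]
              : (ENNReal.ofReal p)⁻¹ ≠ ⊤),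
            lintegral_mul_const' _ _ (by simp [ENNReal.ofReal_eq_zero, not_le, hq0]
              : (ENNReal.ofReal q)⁻¹ ≠ ⊤),
            hIGnp, hIHnq, one_mul, one_mul]
        exact hpq.inv_add_inv_ennreal
      have hae2 : (fun t => Gn t * Hn t) =ᵐ[volume.restrict (Ioi x₀)]
          (fun t => Gn t ^ p / ENNReal.ofReal p + Hn t ^ q / ENNReal.ofReal q) :=
        ae_eq_of_ae_le_of_lintegral_le (ae_of_all _ hyoung_pt)
          (by rw [hIGH]; exact ENNReal.one_ne_top) hmeasRHS.aemeasurable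
          (by rw [hIGH, hIRHS])
      have hGnfin : ∀ᵐ t ∂(volume.restrict (Ioi x₀)), Gn t ≠ ⊤ := by
        have h1 : ∀ᵐ t ∂(volume.restrict (Ioi x₀)), Gn t ^ p < ⊤ :=
          ae_lt_top hmGnp (by rw [hIGnp]; exact ENNReal.one_ne_top)
        filter_upwards [h1] with t ht hcon
        rw [hcon, ENNReal.top_rpow_of_pos hp0] at ht
        exact lt_irrefl ⊤ ht
      have hHnfin : ∀ t, Hn t ≠ ⊤ := fun t =>
        ENNReal.mul_ne_top ENNReal.ofReal_ne_top (by simp [hbe0])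
      have hGH_eq : ∀ᵐ t ∂(volume.restrict (Ioi x₀)), Gn t ^ p = Hn t ^ q := by
        filter_upwards [hae2, hGnfin] with t ht htfin
        have hGa : Gn t = ENNReal.ofReal (Gn t).toReal := (ENNReal.ofReal_toReal htfin).symm
        have hHb : Hn t = ENNReal.ofReal (Hn t).toReal :=
          (ENNReal.ofReal_toReal (hHnfin t)).symm
        set a := (Gn t).toReal with hadef
        set b := (Hn t).toReal with hbdef
        have ha : 0 ≤ a := ENNReal.toReal_nonneg
        have hb : 0 ≤ b := ENNReal.toReal_nonneg
        rw [hGa, hHb] at ht ⊢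
        rw [ENNReal.ofReal_rpow_of_nonneg ha hp0',
            ENNReal.ofReal_rpow_of_nonneg hb hq0.le] at ht ⊢
        rw [← ENNReal.ofReal_mul ha, ← ENNReal.ofReal_div_of_pos hp0,
            ← ENNReal.ofReal_div_of_pos hq0,
            ← ENNReal.ofReal_add (by positivity) (by positivity)] at ht
        rw [ENNReal.ofReal_eq_ofReal_iff (by positivity) (by positivity)] at ht
        congr 1
        exact young_eq hpq ha hb ht
      have hGid : ∀ᵐ t ∂(volume.restrict (Ioi x₀)),
          G t = (W x₀ * V⁻¹) * ENNReal.ofReal (t ^ (-1:ℝ)) := by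
        filter_upwards [hGH_eq, ae_restrict_mem measurableSet_Ioi] with t ht htmem
        have ht0 : (0:ℝ) < t := hx₀.trans htmem
        have h1 : u t ^ p * (W x₀)⁻¹ = v t ^ q * V⁻¹ := by
          rw [← hGnp t, ← hHnq t, ht]
        have h2 : u t ^ p = v t ^ q * V⁻¹ * W x₀ := by
          rw [← h1, mul_assoc, ENNReal.inv_mul_cancel hU0 hUtop, mul_one]
        have h3 := hup_t t ht0
        have h4 := hvq_t t ht0
        have hw0 : ENNReal.ofReal (t ^ (-p⁻¹)) ≠ 0 := by
          simp only [ne_eq, ENNReal.ofReal_eq_zero, not_le]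
          exact Real.rpow_pos_of_pos ht0 _
        have h5 : G t = u t ^ p * (ENNReal.ofReal (t ^ (-p⁻¹)))⁻¹ := by
          rw [h3, mul_assoc, ENNReal.mul_inv_cancel hw0 ENNReal.ofReal_ne_top, mul_one]
        rw [h5, h2, h4]
        have h6 : (ENNReal.ofReal (t ^ (-p⁻¹)))⁻¹ = ENNReal.ofReal (t ^ (p⁻¹)) := by
          rw [← ENNReal.ofReal_inv_of_pos (Real.rpow_pos_of_pos ht0 _)]
          congr 1
          rw [← Real.rpow_neg_one, ← Real.rpow_mul ht0.le]
          congr 1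
          ring
        have h7 : ENNReal.ofReal (t ^ (-1 - p⁻¹)) * ENNReal.ofReal (t ^ (p⁻¹))
            = ENNReal.ofReal (t ^ (-1:ℝ)) := by
          rw [← ENNReal.ofReal_mul (Real.rpow_nonneg ht0.le _), ← Real.rpow_add ht0]
          norm_num
        rw [h6]
        calc ENNReal.ofReal (t ^ (-1 - p⁻¹)) * V⁻¹ * W x₀ * ENNReal.ofReal (t ^ (p⁻¹))
            = ENNReal.ofReal (t ^ (-1 - p⁻¹)) * ENNReal.ofReal (t ^ (p⁻¹))
                * (W x₀ * V⁻¹) := by ring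
          _ = W x₀ * V⁻¹ * ENNReal.ofReal (t ^ (-1:ℝ)) := by rw [h7]; ring
      have hIinv : ∫⁻ t in Ioi x₀, ENNReal.ofReal (t ^ (-1:ℝ)) = ⊤ := by
        by_contra hfin
        have hint : IntegrableOn (fun t : ℝ => t ^ (-1:ℝ)) (Ioi x₀) := by
          refine ⟨(measurable_rpow_const'' _).aestronglyMeasurable, ?_⟩
          rw [hasFiniteIntegral_iff_ofReal
            (by filter_upwards [ae_restrict_mem measurableSet_Ioi] with t ht
                exact Real.rpow_nonneg (le_of_lt (hx₀.trans ht)) _)]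
          exact lt_top_iff_ne_top.2 hfin
        rw [integrableOn_Ioi_rpow_iff hx₀] at hint
        linarith
      have hcon : ∫⁻ t in Ioi x₀, G t = ⊤ := by
        rw [lintegral_congr_ae hGid,
          lintegral_const_mul' _ _ (ENNReal.mul_ne_top hUtop (by simp [hV0])),
          hIinv, ENNReal.mul_top]
        simp only [ne_eq, mul_eq_zero, not_or]
        exact ⟨hU0, by simp [hVtop]⟩
      exact absurd (eq_top_iff.2 (hcon ▸ lintegral_mono_set (Ioi_subset_Ioi hx₀.le))) hB'top
  have hA'lt : A' < ENNReal.ofReal (p ^ p) * B' := by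
    rcases lt_or_eq_of_le hA'le with h | h
    · exact h
    · exfalso
      -- almost-everywhere equality
      have hWanti : AntitoneOn W (Ioi (0:ℝ)) := fun x _ y _ hxy =>
        lintegral_mono_set (Ioi_subset_Ioi hxy)
      have hWaem : AEMeasurable W μ0 :=
        aemeasurable_restrict_of_antitoneOn measurableSet_Ioi hWanti
      have hae : (fun x => ENNReal.ofReal (dualHardyOp f x) ^ p)
          =ᵐ[μ0] (fun x => W x * c1 x) := by
        apply ae_eq_of_ae_le_of_lintegral_le
        · filter_upwards [ae_restrict_mem measurableSet_Ioi] with x hx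
          exact hkey1 x hx
        · rw [← hA'def, h]; exact hRtop
        · exact hWaem.mul hc1meas.aemeasurable
        · rw [← hA'def, h, ← hTon]
          apply le_of_eq
          apply lintegral_congr
          intro x
          exact mul_comm (W x) (c1 x)
      -- find points arbitrarily close to 0 where equality holds
      have hpts : ∀ n : ℕ, ∃ x : ℝ, 0 < x ∧ x < 1/(n+1) ∧
          ENNReal.ofReal (dualHardyOp f x) ^ p = W x * c1 x := by
        intro n
        by_contra hcon
        push_neg at hcon
        have hsub : Ioo (0:ℝ) (1/(n+1)) ⊆
            {x | ¬ (ENNReal.ofReal (dualHardyOp f x) ^ p = W x * c1 x)} ∩ Ioi 0 := by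
          intro x hx
          exact ⟨fun hh => (hcon x hx.1 hx.2) hh, hx.1⟩
        have h0 : μ0 {x | ¬ (ENNReal.ofReal (dualHardyOp f x) ^ p = W x * c1 x)} = 0 := hae
        rw [hμ0, Measure.restrict_apply₀' measurableSet_Ioi.nullMeasurableSet] at h0
        have h1 : volume (Ioo (0:ℝ) (1/(n+1))) = 0 :=
          measure_mono_null hsub h0
        rw [Real.volume_Ioo] at h1
        simp only [ENNReal.ofReal_eq_zero, sub_zero] at h1
        have : (0:ℝ) < 1/(n+1) := by positivity
        linarith
      choose xs hxs0 hxslt hxseq using hpts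
      -- f vanishes a.e. on each (xs n, ∞), hence a.e. on (0, ∞)
      have hnull : ∀ n : ℕ, volume ({t | f t ≠ 0} ∩ Ioi (xs n)) = 0 := by
        intro n
        have h2 := key2 (xs n) (hxs0 n) (hxseq n)
        rw [ae_iff, Measure.restrict_apply₀' measurableSet_Ioi.nullMeasurableSet] at h2
        have hset : {a : ℝ | ¬ f a = 0} = {t : ℝ | f t ≠ 0} := by ext t; simp
        rw [hset] at h2
        exact h2
      apply hne
      have hfmeas0 : MeasurableSet {t : ℝ | f t ≠ 0} := by
        have : {t : ℝ | f t ≠ 0} = f ⁻¹' {0}ᶜ := by ext t; simp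
        rw [this]
        exact hmeas (measurableSet_singleton 0).compl
      have hsub : {t : ℝ | f t ≠ 0} ∩ Ioi 0 ⊆ ⋃ n : ℕ, ({t | f t ≠ 0} ∩ Ioi (xs n)) := by
        rintro t ⟨ht1, ht2⟩
        obtain ⟨n, hn⟩ := exists_nat_one_div_lt (mem_Ioi.1 ht2)
        exact mem_iUnion.2 ⟨n, ht1, (hxslt n).trans hn⟩
      have hnull2 : volume ({t : ℝ | f t ≠ 0} ∩ Ioi 0) = 0 :=
        measure_mono_null hsub (measure_iUnion_null hnull)
      rw [Filter.EventuallyEq, ae_iff, hμ0,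
        Measure.restrict_apply₀' measurableSet_Ioi.nullMeasurableSet]
      have hset : {a : ℝ | ¬ f a = (0 : ℝ → ℝ) a} = {t : ℝ | f t ≠ 0} := by ext t; simp
      rw [hset]
      exact hnull2
  -- convert everything back to real integrals
  have hFanti : AntitoneOn (dualHardyOp f) (Ioi (0:ℝ)) := by
    intro x hx y hy hxy
    apply setIntegral_mono_set (hfint x hx)
    · filter_upwards [ae_restrict_mem measurableSet_Ioi] with t ht
      exact hnonneg t (mem_Ioi.2 (lt_trans (mem_Ioi.1 hx) ht))
    · exact HasSubset.Subset.eventuallyLE (Ioi_subset_Ioi hxy)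
  have haeF : AEMeasurable (dualHardyOp f) μ0 :=
    aemeasurable_restrict_of_antitoneOn measurableSet_Ioi hFanti
  have hcontp : Continuous fun y : ℝ => y ^ p := Real.continuous_rpow_const hp0'
  have hA : ∫ x in Ioi (0:ℝ), dualHardyOp f x ^ p = A'.toReal := by
    rw [integral_eq_lintegral_of_nonneg_ae ?nn ?meas]
    · congr 1
      apply setLIntegral_congr_fun measurableSet_Ioi
      intro x hx
      beta_reduce
      rw [ENNReal.ofReal_rpow_of_nonneg (hFnn x hx) hp0']
    case nn =>
      filter_upwards [ae_restrict_mem measurableSet_Ioi] with x hx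
      exact Real.rpow_nonneg (hFnn x hx) p
    case meas =>
      exact (hcontp.measurable.comp_aemeasurable haeF).aestronglyMeasurable
  have hB : ∫ x in Ioi (0:ℝ), (x * f x) ^ p = B'.toReal := by
    rw [integral_eq_lintegral_of_nonneg_ae ?nn ?meas]
    · congr 1
      apply setLIntegral_congr_fun measurableSet_Ioi
      intro x hx
      simp only [hGdef]
      rw [ENNReal.ofReal_rpow_of_nonneg (mul_nonneg (le_of_lt hx) (hnonneg x hx)) hp0']
    case nn =>
      filter_upwards [ae_restrict_mem measurableSet_Ioi] with x hx
      exact Real.rpow_nonneg (mul_nonneg (le_of_lt hx) (hnonneg x hx)) p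
    case meas =>
      exact (hcontp.measurable.comp (measurable_id.mul hmeas)).aestronglyMeasurable
  rw [hA, hB]
  have hrhs : p ^ p * B'.toReal = (ENNReal.ofReal (p ^ p) * B').toReal := by
    rw [ENNReal.toReal_mul, ENNReal.toReal_ofReal (by positivity)]
  rw [hrhs]
  exact ENNReal.toReal_strict_mono hRtop hA'lt
end

section
/- Let 0 < p ≤ 1 < q < ∞ with p < q. Let a : (0,∞) → ℝ be a (p,q,0)-atom: supp a ⊆ (x₀,x₁) with 0 < x₀ < x₁, ‖a‖_{L^q} ≤ (x₁-x₀)^(1/q - 1/p), and ∫ a(t) dt = 0. Then ∫₀^∞ |Ha(x)|^p dx < 1/(1 - p/q), where Ha(x) = (1/x)∫₀^x a(t) dt. -/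
open MeasureTheory Set

/-- The Hardy averaging operator `Hf(x) = (1/x) ∫₀ˣ f(t) dt`. -/
noncomputable def hardyOp (f : ℝ → ℝ) (x : ℝ) : ℝ := (1/x) * ∫ t in Ioo (0:ℝ) x, f t

theorem atom_estimate_hardyOp (p q : ℝ) (hp0 : 0 < p) (hp1 : p ≤ 1) (hq : 1 < q)
    (hpq : p < q) (x₀ x₁ : ℝ) (h0 : 0 < x₀) (h01 : x₀ < x₁) (a : ℝ → ℝ)
    (hsupp : ∀ x, x ∉ Ioo x₀ x₁ → a x = 0)
    (hmem : MemLp a (ENNReal.ofReal q) (volume.restrict (Ioi (0:ℝ))))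
    (hsize : eLpNorm a (ENNReal.ofReal q) (volume.restrict (Ioi (0:ℝ)))
        ≤ ENNReal.ofReal ((x₁ - x₀) ^ (1/q - 1/p)))
    (hint : IntegrableOn a (Ioi (0:ℝ)))
    (hvanish : ∫ t in Ioi (0:ℝ), a t = 0) :
    ∫ x in Ioi (0:ℝ), |hardyOp a x| ^ p < 1 / (1 - p/q) := by
  have hq0 : (0:ℝ) < q := by linarith
  have hd : (0:ℝ) < x₁ - x₀ := by linarith
  set N : ℝ := (x₁ - x₀) ^ (1/q - 1/p) with hNdef
  have hN0 : 0 < N := Real.rpow_pos_of_pos hd _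
  -- a is integrable on all of ℝ
  have hInt : Integrable a volume := by
    have hsub : Function.support a ⊆ Ioo x₀ x₁ := fun x hx => by
      by_contra h; exact hx (hsupp x h)
    exact (integrableOn_iff_integrable_of_support_subset hsub).1
      (hint.mono_set (fun x hx => lt_trans h0 hx.1))
  -- the primitive
  set G : ℝ → ℝ := fun x => ∫ t in (0:ℝ)..x, a t with hGdef
  have hGcont : Continuous G := hInt.continuous_primitive 0
  have hGIoc : ∀ x, 0 ≤ x → G x = ∫ t in Ioc (0:ℝ) x, a t := fun x hx =>
    intervalIntegral.integral_of_le hx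
  -- G vanishes below x₀
  have hGzero_le : ∀ x, x ≤ x₀ → G x = 0 := by
    intro x hx
    rcases le_or_gt x 0 with h | h
    · have : G x = -∫ t in Ioc x 0, a t := by
        show (∫ t in (0:ℝ)..x, a t) = -∫ t in Ioc x 0, a t
        rw [intervalIntegral.integral_symm x 0, intervalIntegral.integral_of_le h]
      rw [this, setIntegral_eq_zero_of_forall_eq_zero fun y hy =>
        hsupp y (fun hy2 => absurd hy2.1 (by push_neg; linarith [hy.2]))]
      simp
    · rw [hGIoc x h.le, setIntegral_eq_zero_of_forall_eq_zero fun y hy =>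
        hsupp y (fun hy2 => by linarith [hy.2, hy2.1])]
  -- G vanishes above x₁
  have hGzero_ge : ∀ x, x₁ ≤ x → G x = 0 := by
    intro x hx
    rw [hGIoc x (by linarith),
      setIntegral_eq_integral_of_forall_compl_eq_zero (fun y hy => by
        apply hsupp
        intro hy2
        exact hy ⟨by linarith [hy2.1], by linarith [hy2.2]⟩),
      ← setIntegral_eq_integral_of_forall_compl_eq_zero (s := Ioi (0:ℝ)) (fun y hy => by
        apply hsupp
        intro hy2
        exact hy (by simpa using lt_trans h0 hy2.1)), hvanish]
  -- hardyOp agrees with (1/x) * G x on Ioi 0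
  have hHa : ∀ x ∈ Ioi (0:ℝ), hardyOp a x = (1/x) * G x := by
    intro x hx
    rw [hardyOp, hGIoc x (le_of_lt hx), integral_Ioc_eq_integral_Ioo]
  set F : ℝ → ℝ := fun x => |(1/x) * G x| ^ p with hFdef
  -- Hölder estimate : for x₀ < x ≤ x₁, |G x| ≤ N * (x - x₀) ^ (1 - 1/q)
  have holder : ∀ x, x₀ < x → x ≤ x₁ → |G x| ≤ N * (x - x₀) ^ (1 - 1/q) := by
    intro x hx hx1
    have hGx : G x = ∫ t in Ioc x₀ x, a t := by
      rw [hGIoc x (by linarith), ← Ioc_union_Ioc_eq_Ioc h0.le hx.le,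
        setIntegral_union (by simp [Set.disjoint_left]; intros; linarith)
          measurableSet_Ioc (hInt.integrableOn) (hInt.integrableOn),
        setIntegral_eq_zero_of_forall_eq_zero fun y hy =>
          hsupp y (fun hy2 => by linarith [hy.2, hy2.1]), zero_add]
    have hdx : (0:ℝ) < x - x₀ := by linarith
    have key : ENNReal.ofReal |G x| ≤ ENNReal.ofReal (N * (x - x₀) ^ (1 - 1/q)) := by
      have hsub : Ioc x₀ x ⊆ Ioi (0:ℝ) := fun y hy => lt_trans h0 hy.1
      have hmono : volume.restrict (Ioc x₀ x) ≤ volume.restrict (Ioi (0:ℝ)) :=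
        Measure.restrict_mono hsub le_rfl
      have hm : AEStronglyMeasurable a (volume.restrict (Ioc x₀ x)) :=
        hmem.1.mono_measure hmono
      have h1 : ENNReal.ofReal |G x| ≤ eLpNorm a 1 (volume.restrict (Ioc x₀ x)) := by
        rw [eLpNorm_one_eq_lintegral_enorm, hGx, ← Real.norm_eq_abs,
          ofReal_norm_eq_enorm]
        exact enorm_integral_le_lintegral_enorm _
      have h2 : eLpNorm a 1 (volume.restrict (Ioc x₀ x))
          ≤ eLpNorm a (ENNReal.ofReal q) (volume.restrict (Ioc x₀ x))
            * (volume (Ioc x₀ x)) ^ (1 - 1/q) := by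
        have := eLpNorm_le_eLpNorm_mul_rpow_measure_univ
          (p := 1) (q := ENNReal.ofReal q) (μ := volume.restrict (Ioc x₀ x))
          (ENNReal.one_le_ofReal.2 hq.le) hm
        simpa [Measure.restrict_apply, ENNReal.toReal_ofReal hq0.le] using this
      have h3 : eLpNorm a (ENNReal.ofReal q) (volume.restrict (Ioc x₀ x))
          ≤ ENNReal.ofReal N := le_trans (eLpNorm_mono_measure a hmono) hsize
      calc ENNReal.ofReal |G x| ≤ eLpNorm a 1 (volume.restrict (Ioc x₀ x)) := h1
        _ ≤ eLpNorm a (ENNReal.ofReal q) (volume.restrict (Ioc x₀ x))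
            * (volume (Ioc x₀ x)) ^ (1 - 1/q) := h2
        _ ≤ ENNReal.ofReal N * ENNReal.ofReal (x - x₀) ^ (1 - 1/q) := by
            rw [Real.volume_Ioc]
            exact mul_le_mul_left h3 _
        _ = ENNReal.ofReal (N * (x - x₀) ^ (1 - 1/q)) := by
            rw [ENNReal.ofReal_rpow_of_pos hdx, ← ENNReal.ofReal_mul hN0.le]
    have := (ENNReal.ofReal_le_ofReal_iff
      (by positivity)).1 key
    exact this
  -- pointwise strict bound on Ioc x₀ x₁
  set g : ℝ → ℝ := fun x => N ^ p * (x - x₀) ^ (-(p/q)) with hgdef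
  have hgpos : ∀ x, x₀ < x → 0 < g x := fun x hx => by
    have : (0:ℝ) < x - x₀ := by linarith
    positivity
  have hFlt : ∀ x ∈ Ioc x₀ x₁, F x < g x := by
    rintro x ⟨hx, hx1⟩
    rcases eq_or_lt_of_le hx1 with rfl | hxlt
    · have : F x = 0 := by
        rw [hFdef]
        simp [hGzero_ge x le_rfl, Real.zero_rpow hp0.ne']
      rw [this]; exact hgpos x hx
    have hdx : (0:ℝ) < x - x₀ := by linarith
    have hxpos : (0:ℝ) < x := by linarith
    have hB : |(1/x) * G x| < N * (x - x₀) ^ (-(1/q)) := by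
      have h1 : |(1/x) * G x| ≤ (1/x) * (N * (x - x₀) ^ (1 - 1/q)) := by
        rw [abs_mul, abs_of_pos (by positivity : (0:ℝ) < 1/x)]
        exact mul_le_mul_of_nonneg_left (holder x hx hx1) (by positivity)
      have h2 : (1/x) * (N * (x - x₀) ^ (1 - 1/q))
          < (1/(x - x₀)) * (N * (x - x₀) ^ (1 - 1/q)) := by
        apply mul_lt_mul_of_pos_right _ (by positivity)
        apply one_div_lt_one_div_of_lt hdx
        linarith
      have h3 : (1/(x - x₀)) * (N * (x - x₀) ^ (1 - 1/q))
          = N * (x - x₀) ^ (-(1/q)) := by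
        have e1 : (x - x₀) ^ (1 - 1/q) = (x - x₀) ^ (-(1/q)) * (x - x₀) := by
          rw [← Real.rpow_add_one hdx.ne' (-(1/q))]
          congr 1
          ring
        rw [e1]
        field_simp
      linarith [h3 ▸ h2]
    have := Real.rpow_lt_rpow (abs_nonneg _) hB hp0
    calc F x = |(1/x) * G x| ^ p := rfl
      _ < (N * (x - x₀) ^ (-(1/q))) ^ p := this
      _ = g x := by
          rw [hgdef]
          dsimp only
          rw [Real.mul_rpow hN0.le (Real.rpow_nonneg hdx.le _),
            ← Real.rpow_mul hdx.le]
          congr 1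
          ring
  -- F vanishes outside Ioc x₀ x₁
  have hF0 : ∀ x, x ∉ Ioc x₀ x₁ → F x = 0 := by
    intro x hx
    rcases le_or_gt x x₀ with h | h
    · have := hGzero_le x h
      simp [hFdef, this, Real.zero_rpow hp0.ne']
    · have hx1 : x₁ < x := by
        by_contra hc
        exact hx ⟨h, by linarith⟩
      have := hGzero_ge x hx1.le
      simp [hFdef, this, Real.zero_rpow hp0.ne']
  -- F is continuous on [x₀, x₁]
  have hFcont : ContinuousOn F (Icc x₀ x₁) := by
    apply ContinuousOn.rpow_const
    · apply ContinuousOn.abs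
      exact (continuousOn_const.div continuousOn_id
        (fun x hx => ne_of_gt (lt_of_lt_of_le h0 hx.1))).mul hGcont.continuousOn
    · exact fun x _ => Or.inr hp0.le
  have hFint : IntervalIntegrable F volume x₀ x₁ :=
    hFcont.intervalIntegrable_of_Icc h01.le
  -- g is interval integrable
  have hrq : (-1:ℝ) < -(p/q) := by
    have : p / q < 1 := (div_lt_one hq0).2 hpq
    linarith
  have hgint : IntervalIntegrable g volume x₀ x₁ := by
    have h1 : IntervalIntegrable (fun u : ℝ => u ^ (-(p/q))) volume 0 (x₁ - x₀) :=
      intervalIntegral.intervalIntegrable_rpow' hrq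
    have h2 := h1.comp_sub_right x₀
    have h3 : IntervalIntegrable (fun x => (x - x₀) ^ (-(p/q))) volume x₀ x₁ := by
      simpa using h2
    simpa [hgdef] using h3.const_mul (N ^ p)
  -- strict inequality of interval integrals
  have hlt : (∫ x in x₀..x₁, F x) < ∫ x in x₀..x₁, g x := by
    apply intervalIntegral.integral_lt_integral_of_ae_le_of_measure_setOf_lt_ne_zero
      h01.le hFint hgint
    · exact (ae_restrict_iff' measurableSet_Ioc).2
        (Filter.Eventually.of_forall fun x hx => (hFlt x hx).le)
    · have hmono : volume.restrict (Ioc x₀ x₁) (Ioc x₀ x₁)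
          ≤ volume.restrict (Ioc x₀ x₁) {x | F x < g x} :=
        measure_mono fun x hx => hFlt x hx
      rw [Measure.restrict_apply_self, Real.volume_Ioc] at hmono
      intro hzero
      rw [hzero, le_zero_iff, ENNReal.ofReal_eq_zero] at hmono
      linarith
  -- value of the integral of g
  have hgval : (∫ x in x₀..x₁, g x) = 1 / (1 - p/q) := by
    have h1 : (∫ x in x₀..x₁, (x - x₀) ^ (-(p/q))) = ∫ u in (0:ℝ)..(x₁ - x₀), u ^ (-(p/q)) := by
      have := intervalIntegral.integral_comp_sub_right
        (a := x₀) (b := x₁) (fun u : ℝ => u ^ (-(p/q))) x₀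
      simpa using this
    have hexp : (0:ℝ) < -(p/q) + 1 := by linarith
    have hNp : N ^ p = (x₁ - x₀) ^ (p/q - 1) := by
      rw [hNdef, ← Real.rpow_mul hd.le]
      congr 1
      field_simp
    have hprod : (x₁ - x₀) ^ (p/q - 1) * (x₁ - x₀) ^ (-(p/q) + 1) = 1 := by
      rw [← Real.rpow_add hd]
      norm_num
    calc (∫ x in x₀..x₁, g x) = N ^ p * ∫ x in x₀..x₁, (x - x₀) ^ (-(p/q)) := by
          rw [hgdef, intervalIntegral.integral_const_mul]
      _ = N ^ p * (((x₁ - x₀) ^ (-(p/q) + 1) - (0:ℝ) ^ (-(p/q) + 1)) / (-(p/q) + 1)) := by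
          rw [h1, integral_rpow (Or.inl hrq)]
      _ = 1 / (1 - p/q) := by
          rw [Real.zero_rpow hexp.ne', hNp]
          rw [sub_zero, mul_div_assoc', hprod]
          congr 1
          ring
  -- assemble
  have key : (∫ x in Ioi (0:ℝ), |hardyOp a x| ^ p) = ∫ x in x₀..x₁, F x := by
    rw [setIntegral_congr_fun measurableSet_Ioi
      (fun x hx => by show |hardyOp a x| ^ p = F x; rw [hHa x hx] : EqOn (fun x => |hardyOp a x| ^ p) F (Ioi 0)),
      setIntegral_eq_integral_of_forall_compl_eq_zero (fun x hx => by
        apply hF0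
        intro hx2
        exact hx (by simpa using lt_trans h0 hx2.1)),
      ← setIntegral_eq_integral_of_forall_compl_eq_zero hF0,
      intervalIntegral.integral_of_le h01.le]
  rw [key, ← hgval]
  exact hlt
end

section
/- Let 0 < p < 1. Let a : (0,∞) → ℝ be a (p,1,0)-atom: supp a ⊆ (x₀,x₁) with 0 < x₀ < x₁, ‖a‖_{L^1} ≤ (x₁-x₀)^(1 - 1/p), and ∫ a(t) dt = 0. Then ∫₀^∞ |Ha(x)|^p dx < 1/(1-p). -/
open MeasureTheory Set

/-- Strict subadditivity of `rpow` for exponents in `(0,1)`. -/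
lemma rpow_add_strict_subadd {u v s : ℝ} (hu : 0 < u) (hv : 0 < v) (hs0 : 0 < s)
    (hs1 : s < 1) : (u + v) ^ s < u ^ s + v ^ s := by
  have huv : 0 < u + v := by linarith
  have key : ∀ w : ℝ, 0 < w → w ^ s = w * w ^ (s - 1) := by
    intro w hw
    rw [Real.rpow_sub hw, Real.rpow_one, mul_div_cancel₀ _ (ne_of_gt hw)]
  have h1 : (u + v) ^ (s - 1) < u ^ (s - 1) :=
    Real.rpow_lt_rpow_of_neg hu (by linarith) (by linarith)
  have h2 : (u + v) ^ (s - 1) < v ^ (s - 1) :=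
    Real.rpow_lt_rpow_of_neg hv (by linarith) (by linarith)
  calc (u + v) ^ s = u * (u + v) ^ (s - 1) + v * (u + v) ^ (s - 1) := by
        rw [key _ huv]; ring
    _ < u * u ^ (s - 1) + v * v ^ (s - 1) := by
        apply add_lt_add
        · exact mul_lt_mul_of_pos_left h1 hu
        · exact mul_lt_mul_of_pos_left h2 hv
    _ = u ^ s + v ^ s := by rw [key _ hu, key _ hv]

theorem atom_estimate_hardyOp_q_one (p : ℝ) (hp0 : 0 < p) (hp1 : p < 1)
    (x₀ x₁ : ℝ) (h0 : 0 < x₀) (h01 : x₀ < x₁) (a : ℝ → ℝ)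
    (hsupp : ∀ x, x ∉ Ioo x₀ x₁ → a x = 0)
    (hint : IntegrableOn a (Ioi (0:ℝ)))
    (hsize : ∫ t in Ioi (0:ℝ), |a t| ≤ (x₁ - x₀) ^ (1 - 1/p))
    (hvanish : ∫ t in Ioi (0:ℝ), a t = 0) :
    ∫ x in Ioi (0:ℝ), |hardyOp a x| ^ p < 1 / (1 - p) := by
  have hd : 0 < x₁ - x₀ := by linarith
  set C : ℝ := (x₁ - x₀) ^ (1 - 1/p) with hC
  have hCpos : 0 < C := Real.rpow_pos_of_pos hd _
  have hsub01 : Ioo x₀ x₁ ⊆ Ioi (0:ℝ) := fun x hx => lt_trans h0 hx.1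
  -- hardyOp vanishes on (0, x₀]
  have hzero_lo : ∀ x : ℝ, x ≤ x₀ → hardyOp a x = 0 := by
    intro x hxx0
    have h1 : ∫ t in Ioo (0:ℝ) x, a t = 0 := by
      apply setIntegral_eq_zero_of_forall_eq_zero
      intro t ht
      exact hsupp t (fun hmem => by exact absurd hmem.1 (by linarith [ht.2]))
    simp [hardyOp, h1]
  -- hardyOp vanishes on [x₁, ∞)
  have hzero_hi : ∀ x : ℝ, x₁ ≤ x → hardyOp a x = 0 := by
    intro x hx
    have h1 : ∫ t in Ioi (0:ℝ), a t = ∫ t in Ioo (0:ℝ) x, a t := by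
      apply setIntegral_eq_of_subset_of_forall_diff_eq_zero measurableSet_Ioi
      · exact fun t ht => ht.1
      · intro t ht
        apply hsupp
        intro hmem
        have h2 : ¬ (0 < t ∧ t < x) := fun hc => ht.2 ⟨hc.1, hc.2⟩
        push_neg at h2
        have := h2 ht.1
        exact absurd hmem.2 (by linarith)
    have h3 : ∫ t in Ioo (0:ℝ) x, a t = 0 := by rw [← h1, hvanish]
    simp [hardyOp, h3]
  -- reduce domain of the integral
  have hstep : ∫ x in Ioi (0:ℝ), |hardyOp a x| ^ p
      = ∫ x in Ioo x₀ x₁, |hardyOp a x| ^ p := by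
    apply setIntegral_eq_of_subset_of_forall_diff_eq_zero measurableSet_Ioi hsub01
    intro x hx
    have hzero : hardyOp a x = 0 := by
      rcases le_or_gt x x₀ with h | h
      · exact hzero_lo x h
      · refine hzero_hi x ?_
        by_contra hc
        push_neg at hc
        exact hx.2 ⟨h, hc⟩
    rw [hzero, abs_zero, Real.zero_rpow (ne_of_gt hp0)]
  -- a is globally integrable
  have ha_int : Integrable a := by
    have h1 : IntegrableOn a (Ioo x₀ x₁) := hint.mono_set hsub01
    have h2 : a = (Ioo x₀ x₁).indicator a := by
      funext x
      by_cases hx : x ∈ Ioo x₀ x₁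
      · simp [indicator_of_mem hx]
      · simp [indicator_of_notMem hx, hsupp x hx]
    rw [h2]
    rwa [integrable_indicator_iff measurableSet_Ioo]
  -- representation of hardyOp via a primitive
  have hrep : hardyOp a = fun x => x⁻¹ * ∫ t in (0:ℝ)..x, a t := by
    funext x
    rcases le_or_gt x 0 with hx | hx
    · have h1 : Ioo (0:ℝ) x = ∅ := Ioo_eq_empty (by linarith)
      have h2 : ∫ t in (0:ℝ)..x, a t = 0 := by
        rw [intervalIntegral.integral_of_ge hx]
        have h3 : ∫ t in Ioc x (0:ℝ), a t = 0 := by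
          apply setIntegral_eq_zero_of_forall_eq_zero
          intro t ht
          exact hsupp t (fun hmem => by exact absurd hmem.1 (by linarith [ht.2]))
        rw [h3, neg_zero]
      simp [hardyOp, h1, h2]
    · rw [hardyOp, intervalIntegral.integral_of_le hx.le, integral_Ioc_eq_integral_Ioo,
        one_div]
  have hF : Continuous fun x : ℝ => ∫ t in (0:ℝ)..x, a t :=
    MeasureTheory.Integrable.continuous_primitive ha_int 0
  have hmeasH : Measurable fun x => |hardyOp a x| ^ p := by
    have h1 : Measurable (hardyOp a) := by
      rw [hrep]
      exact measurable_inv.mul hF.measurable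
    exact (Real.continuous_rpow_const hp0.le).measurable.comp h1.abs
  -- pointwise bound on (x₀, x₁)
  have hbound : ∀ x ∈ Ioo x₀ x₁, |hardyOp a x| ^ p ≤ C ^ p * x ^ (-p) := by
    intro x hx
    have hx0 : 0 < x := lt_trans h0 hx.1
    have h1 : |hardyOp a x| ≤ C / x := by
      rw [hardyOp, abs_mul, abs_of_nonneg (by positivity : (0:ℝ) ≤ 1/x)]
      have h2 : |∫ t in Ioo (0:ℝ) x, a t| ≤ ∫ t in Ioo (0:ℝ) x, |a t| := by
        simpa [Real.norm_eq_abs] using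
          norm_integral_le_integral_norm (μ := volume.restrict (Ioo (0:ℝ) x)) a
      have h3 : ∫ t in Ioo (0:ℝ) x, |a t| ≤ ∫ t in Ioi (0:ℝ), |a t| := by
        apply setIntegral_mono_set hint.abs (ae_of_all _ fun t => abs_nonneg _)
        exact HasSubset.Subset.eventuallyLE (fun t ht => ht.1)
      calc (1/x) * |∫ t in Ioo (0:ℝ) x, a t| ≤ (1/x) * C := by
            apply mul_le_mul_of_nonneg_left _ (by positivity)
            exact h2.trans (h3.trans hsize)
        _ = C / x := by ring
    calc |hardyOp a x| ^ p ≤ (C / x) ^ p :=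
          Real.rpow_le_rpow (abs_nonneg _) h1 hp0.le
      _ = C ^ p * x ^ (-p) := by
          rw [div_eq_mul_inv, Real.mul_rpow hCpos.le (inv_nonneg.mpr hx0.le),
            Real.inv_rpow hx0.le, ← Real.rpow_neg hx0.le]
  -- integrability of the majorant
  have hg_int : IntegrableOn (fun x => C ^ p * x ^ (-p)) (Ioo x₀ x₁) := by
    apply IntegrableOn.mono_set _ Ioo_subset_Icc_self
    apply ContinuousOn.integrableOn_compact isCompact_Icc
    exact continuousOn_const.mul (fun x hx =>
      (Real.continuousAt_rpow_const x (-p)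
        (Or.inl (ne_of_gt (lt_of_lt_of_le h0 hx.1)))).continuousWithinAt)
  -- integrability of |hardyOp|^p on (x₀, x₁)
  have hf_int : IntegrableOn (fun x => |hardyOp a x| ^ p) (Ioo x₀ x₁) := by
    apply Integrable.mono hg_int hmeasH.aestronglyMeasurable
    rw [ae_restrict_iff' measurableSet_Ioo]
    apply ae_of_all
    intro x hx
    have hx0 : 0 < x := lt_trans h0 hx.1
    rw [Real.norm_eq_abs, Real.norm_eq_abs,
      abs_of_nonneg (Real.rpow_nonneg (abs_nonneg _) p),
      abs_of_nonneg (by positivity : (0:ℝ) ≤ C ^ p * x ^ (-p))]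
    exact hbound x hx
  -- the key strict inequality
  have hsub : x₁ ^ (1-p) - x₀ ^ (1-p) < (x₁ - x₀) ^ (1-p) := by
    have := rpow_add_strict_subadd h0 hd (by linarith : (0:ℝ) < 1 - p) (by linarith)
    have h4 : x₀ + (x₁ - x₀) = x₁ := by ring
    rw [h4] at this
    linarith
  have hCp : C ^ p = (x₁ - x₀) ^ (p - 1) := by
    rw [hC, ← Real.rpow_mul hd.le]
    congr 1
    field_simp
  have h1p : 0 < 1 - p := by linarith
  calc ∫ x in Ioi (0:ℝ), |hardyOp a x| ^ p
      = ∫ x in Ioo x₀ x₁, |hardyOp a x| ^ p := hstep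
    _ ≤ ∫ x in Ioo x₀ x₁, C ^ p * x ^ (-p) :=
        setIntegral_mono_on hf_int hg_int measurableSet_Ioo hbound
    _ = C ^ p * ((x₁ ^ (1-p) - x₀ ^ (1-p)) / (1-p)) := by
        rw [← integral_Ioc_eq_integral_Ioo, ← intervalIntegral.integral_of_le h01.le,
          intervalIntegral.integral_const_mul,
          integral_rpow (Or.inl (by linarith : (-1:ℝ) < -p))]
        rw [show -p + 1 = 1 - p by ring]
    _ < C ^ p * ((x₁ - x₀) ^ (1-p) / (1-p)) := by
        have hCppos : 0 < C ^ p := Real.rpow_pos_of_pos hCpos p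
        gcongr
    _ = 1 / (1 - p) := by
        rw [hCp, ← mul_div_assoc, ← Real.rpow_add hd,
          show p - 1 + (1 - p) = 0 by ring, Real.rpow_zero]
end

section
/- Let 0 < p ≤ 1. Let a : (0,∞) → ℝ be a (p,∞,0)-atom: supp a ⊆ (x₀,x₁) with 0 < x₀ < x₁, ‖a‖_{L^∞} ≤ (x₁-x₀)^(-1/p), and ∫ a(t) dt = 0. Then ∫₀^∞ |Ha(x)|^p dx < 1. -/
open MeasureTheory Set

theorem atom_estimate_hardyOp_q_infty (p : ℝ) (hp0 : 0 < p) (hp1 : p ≤ 1)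
    (x₀ x₁ : ℝ) (h0 : 0 < x₀) (h01 : x₀ < x₁) (a : ℝ → ℝ)
    (hsupp : ∀ x, x ∉ Ioo x₀ x₁ → a x = 0)
    (hmem : MemLp a ⊤ (volume.restrict (Ioi (0:ℝ))))
    (hsize : eLpNorm a ⊤ (volume.restrict (Ioi (0:ℝ)))
        ≤ ENNReal.ofReal ((x₁ - x₀) ^ (-(1/p))))
    (hint : IntegrableOn a (Ioi (0:ℝ)))
    (hvanish : ∫ t in Ioi (0:ℝ), a t = 0) :
    ∫ x in Ioi (0:ℝ), |hardyOp a x| ^ p < 1 := by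
  set C : ℝ := (x₁ - x₀) ^ (-(1/p)) with hCdef
  have hd : 0 < x₁ - x₀ := by linarith
  have hCpos : 0 < C := Real.rpow_pos_of_pos hd _
  set r : ℝ := (x₁ - x₀) / (x₀ + x₁) with hrdef
  have hden : 0 < x₀ + x₁ := by linarith
  have hr0 : 0 ≤ r := div_nonneg hd.le hden.le
  have hr1 : r < 1 := by
    rw [hrdef, div_lt_one hden]; linarith
  -- a.e. bound on `a`
  have haeb : ∀ᵐ x ∂(volume.restrict (Ioi (0:ℝ))), ‖a x‖ ≤ C := by
    rw [eLpNorm_exponent_top] at hsize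
    filter_upwards [enorm_ae_le_eLpNormEssSup a (volume.restrict (Ioi (0:ℝ)))] with x hx
    have h2 : (ENNReal.ofReal ‖a x‖) ≤ ENNReal.ofReal C := by
      rw [ofReal_norm]; exact hx.trans hsize
    exact (ENNReal.ofReal_le_ofReal_iff hCpos.le).mp h2
  -- integral of a over the support interval is zero
  have hsub01 : Ioo x₀ x₁ ⊆ Ioi (0:ℝ) := fun t ht => lt_trans h0 ht.1
  have hA : ∫ t in Ioo x₀ x₁, a t = 0 := by
    rw [← setIntegral_eq_of_subset_of_forall_diff_eq_zero measurableSet_Ioi hsub01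
      (fun x hx => hsupp x hx.2)]
    exact hvanish
  -- norm bound for set integrals on subsets of Ioi 0
  have hbnd : ∀ s : Set ℝ, s ⊆ Ioi (0:ℝ) → volume s ≠ ⊤ →
      ‖∫ t in s, a t‖ ≤ C * (volume s).toReal := by
    intro s hs hfin
    exact norm_setIntegral_le_of_norm_le_const_ae hfin.lt_top
      (ae_restrict_of_ae_restrict_of_subset hs haeb)
  -- hardyOp vanishes off (x₀, x₁)
  have hHa0 : ∀ x ∈ Ioi (0:ℝ), x ∉ Ioo x₀ x₁ → hardyOp a x = 0 := by
    intro x hx hnx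
    rcases not_and_or.mp hnx with h | h
    · push_neg at h
      have : ∫ t in Ioo (0:ℝ) x, a t = 0 :=
        setIntegral_eq_zero_of_forall_eq_zero fun t ht =>
          hsupp t (fun hm => (not_lt.mpr (ht.2.le.trans h)) hm.1)
      simp [hardyOp, this]
    · push_neg at h
      have hsub : Ioo x₀ x₁ ⊆ Ioo (0:ℝ) x := fun t ht => ⟨lt_trans h0 ht.1, lt_of_lt_of_le ht.2 h⟩
      have : ∫ t in Ioo (0:ℝ) x, a t = 0 := by
        rw [setIntegral_eq_of_subset_of_forall_diff_eq_zero measurableSet_Ioo hsub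
          (fun t ht => hsupp t ht.2)]
        exact hA
      simp [hardyOp, this]
  -- the pointwise bound on (x₀, x₁)
  have hkey : ∀ x ∈ Ioo x₀ x₁, |hardyOp a x| ≤ C * r := by
    intro x hx
    have hxpos : 0 < x := lt_trans h0 hx.1
    have e1 : ∫ t in Ioo (0:ℝ) x, a t = ∫ t in Ioo x₀ x, a t := by
      refine setIntegral_eq_of_subset_of_forall_diff_eq_zero measurableSet_Ioo
        (fun t ht => ⟨lt_trans h0 ht.1, ht.2⟩) (fun t ht => hsupp t ?_)
      intro hm
      exact ht.2 ⟨hm.1, ht.1.2⟩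
    have habs : |hardyOp a x| = |∫ t in Ioo (0:ℝ) x, a t| / x := by
      rw [hardyOp, abs_mul, abs_of_pos (by positivity : (0:ℝ) < 1/x)]
      rw [one_div, inv_mul_eq_div]
    rcases le_or_gt x ((x₀ + x₁) / 2) with hhalf | hhalf
    · -- use bound C * (x - x₀)
      have hb : ‖∫ t in Ioo x₀ x, a t‖ ≤ C * (x - x₀) := by
        have := hbnd (Ioo x₀ x) (fun t ht => lt_trans h0 ht.1)
          (by simp [Real.volume_Ioo])
        rwa [Real.volume_Ioo, ENNReal.toReal_ofReal (by linarith [hx.1] : (0:ℝ) ≤ x - x₀)] at this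
      rw [habs, e1, div_le_iff₀ hxpos]
      calc |∫ t in Ioo x₀ x, a t| ≤ C * (x - x₀) := hb
        _ ≤ C * r * x := by
            rw [hrdef]
            rw [mul_assoc, div_mul_eq_mul_div, mul_comm _ x]
            rw [mul_le_mul_iff_right₀ hCpos, le_div_iff₀ hden]
            nlinarith [hx.1]
    · -- use bound C * (x₁ - x)
      have e2 : ∫ t in Ioo x₀ x, a t = - ∫ t in Ico x x₁, a t := by
        have hdisj : Disjoint (Ioo x₀ x) (Ico x x₁) := by
          apply Set.disjoint_left.mpr
          intro t ht1 ht2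
          exact absurd ht2.1 (not_le.mpr ht1.2)
        have hu : Ioo x₀ x ∪ Ico x x₁ = Ioo x₀ x₁ := Ioo_union_Ico_eq_Ioo hx.1 hx.2.le
        have hi1 : IntegrableOn a (Ioo x₀ x) := hint.mono_set (fun t ht => lt_trans h0 ht.1)
        have hi2 : IntegrableOn a (Ico x x₁) := hint.mono_set (fun t ht => lt_of_lt_of_le hxpos ht.1)
        have := setIntegral_union hdisj measurableSet_Ico hi1 hi2
        rw [hu, hA] at this
        linarith [this]
      have hb : ‖∫ t in Ico x x₁, a t‖ ≤ C * (x₁ - x) := by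
        have := hbnd (Ico x x₁) (fun t ht => lt_of_lt_of_le hxpos ht.1)
          (by simp [Real.volume_Ico])
        rwa [Real.volume_Ico, ENNReal.toReal_ofReal (by linarith [hx.2] : (0:ℝ) ≤ x₁ - x)] at this
      rw [habs, e1, e2, abs_neg, div_le_iff₀ hxpos]
      calc |∫ t in Ico x x₁, a t| ≤ C * (x₁ - x) := hb
        _ ≤ C * r * x := by
            rw [hrdef, mul_assoc, div_mul_eq_mul_div, mul_comm _ x]
            rw [mul_le_mul_iff_right₀ hCpos, le_div_iff₀ hden]
            nlinarith [hx.2]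
  -- reduce the integral to (x₀, x₁)
  have hred : ∫ x in Ioi (0:ℝ), |hardyOp a x| ^ p = ∫ x in Ioo x₀ x₁, |hardyOp a x| ^ p := by
    refine setIntegral_eq_of_subset_of_forall_diff_eq_zero measurableSet_Ioi hsub01 ?_
    intro x hx
    rw [hHa0 x hx.1 hx.2, abs_zero, Real.zero_rpow hp0.ne']
  rw [hred]
  have hvol : volume (Ioo x₀ x₁) < ⊤ := by simp [Real.volume_Ioo]
  have hbound : ‖∫ x in Ioo x₀ x₁, |hardyOp a x| ^ p‖ ≤ (C * r) ^ p * (volume (Ioo x₀ x₁)).toReal := by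
    refine norm_setIntegral_le_of_norm_le_const_ae' hvol
      (Filter.Eventually.of_forall fun x hx => ?_)
    rw [Real.norm_eq_abs, abs_of_nonneg (Real.rpow_nonneg (abs_nonneg _) p)]
    exact Real.rpow_le_rpow (abs_nonneg _) (hkey x hx) hp0.le
  have hnn : 0 ≤ ∫ x in Ioo x₀ x₁, |hardyOp a x| ^ p :=
    setIntegral_nonneg measurableSet_Ioo (fun x _ => Real.rpow_nonneg (abs_nonneg _) p)
  rw [Real.norm_eq_abs, abs_of_nonneg hnn, Real.volume_Ioo,
    ENNReal.toReal_ofReal hd.le] at hbound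
  have hCp : C ^ p = (x₁ - x₀)⁻¹ := by
    rw [hCdef, ← Real.rpow_mul hd.le]
    have : -(1/p) * p = -1 := by field_simp
    rw [this, Real.rpow_neg_one]
  have hfin : (C * r) ^ p * (x₁ - x₀) = r ^ p := by
    rw [Real.mul_rpow hCpos.le hr0, hCp]
    field_simp
  rw [hfin] at hbound
  exact lt_of_le_of_lt hbound (Real.rpow_lt_one hr0 hr1 hp0)
end

section
/- Let 0 < p ≤ 1. Let a : (0,∞) → ℝ be a (p,∞,0)_{x^p}-atom: supp a ⊆ (x₀,x₁) with 0 < x₀ < x₁, ‖a‖_{L^∞} ≤ (∫_{x₀}^{x₁} x^p dx)^(-1/p), and ∫ a(t) dt = 0. Then ∫₀^∞ |H*a(x)|^p dx < 1, where H*a(x) = ∫ₓ^∞ a(t) dt. -/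
open MeasureTheory Set

lemma rpow_strict_superadd {u v r : ℝ} (hu : 0 < u) (hv : 0 < v) (hr : 1 < r) :
    u ^ r + v ^ r < (u + v) ^ r := by
  have huv : 0 < u + v := by linarith
  have h1 : u ^ r = u * u ^ (r - 1) := by
    rw [← Real.rpow_one_add' (le_of_lt hu) (by intro h; linarith)]
    ring_nf
  have h2 : v ^ r = v * v ^ (r - 1) := by
    rw [← Real.rpow_one_add' (le_of_lt hv) (by intro h; linarith)]
    ring_nf
  have h3 : (u + v) ^ r = (u + v) * (u + v) ^ (r - 1) := by
    rw [← Real.rpow_one_add' (le_of_lt huv) (by intro h; linarith)]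
    ring_nf
  have hu' : u ^ (r - 1) < (u + v) ^ (r - 1) :=
    Real.rpow_lt_rpow (le_of_lt hu) (by linarith) (by linarith)
  have hv' : v ^ (r - 1) < (u + v) ^ (r - 1) :=
    Real.rpow_lt_rpow (le_of_lt hv) (by linarith) (by linarith)
  calc u ^ r + v ^ r = u * u ^ (r - 1) + v * v ^ (r - 1) := by rw [h1, h2]
    _ < u * (u + v) ^ (r - 1) + v * (u + v) ^ (r - 1) := by
        exact add_lt_add (by exact mul_lt_mul_of_pos_left hu' hu)
          (by exact mul_lt_mul_of_pos_left hv' hv)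
    _ = (u + v) * (u + v) ^ (r - 1) := by ring
    _ = (u + v) ^ r := h3.symm

theorem weighted_atom_estimate_dualHardyOp_q_infty (p : ℝ) (hp0 : 0 < p) (hp1 : p ≤ 1)
    (x₀ x₁ : ℝ) (h0 : 0 < x₀) (h01 : x₀ < x₁) (a : ℝ → ℝ)
    (hsupp : ∀ x, x ∉ Ioo x₀ x₁ → a x = 0)
    (hmem : MemLp a ⊤ (volume.restrict (Ioi (0:ℝ))))
    (hsize : eLpNorm a ⊤ (volume.restrict (Ioi (0:ℝ)))
        ≤ ENNReal.ofReal ((∫ x in x₀..x₁, x ^ p) ^ (-(1/p))))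
    (hint : IntegrableOn a (Ioi (0:ℝ)))
    (hvanish : ∫ t in Ioi (0:ℝ), a t = 0) :
    ∫ x in Ioi (0:ℝ), |dualHardyOp a x| ^ p < 1 := by
  have hp0' : p ≠ 0 := ne_of_gt hp0
  have hp1pos : (0:ℝ) < p + 1 := by linarith
  -- value of the weight integral
  set M : ℝ := ∫ x in x₀..x₁, x ^ p with hM
  have hMval : M = (x₁ ^ (p + 1) - x₀ ^ (p + 1)) / (p + 1) :=
    integral_rpow (Or.inl (by linarith))
  have hx01 : x₀ ^ (p + 1) < x₁ ^ (p + 1) :=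
    Real.rpow_lt_rpow (le_of_lt h0) h01 hp1pos
  have hMpos : 0 < M := by
    rw [hMval]; exact div_pos (by linarith) hp1pos
  set C : ℝ := M ^ (-(1/p)) with hC
  have hCpos : 0 < C := Real.rpow_pos_of_pos hMpos _
  -- a is integrable on ℝ
  have haeq : a = (Ioi (0:ℝ)).indicator a := by
    funext x
    by_cases hx : x ∈ Ioi (0:ℝ)
    · simp [indicator_of_mem hx]
    · simp [indicator_of_notMem hx]
      exact hsupp x (fun h => hx (lt_trans h0 h.1))
  have haInt : Integrable a := by
    rw [haeq]; exact hint.integrable_indicator measurableSet_Ioi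
  have haII : ∀ c d : ℝ, IntervalIntegrable a volume c d := fun c d =>
    haInt.intervalIntegrable
  -- the primitive
  set F : ℝ → ℝ := fun x => ∫ t in x..x₁, a t with hF
  have hFcont : Continuous F := by
    have : Continuous fun x => ∫ t in x₁..x, a t :=
      intervalIntegral.continuous_primitive haII x₁
    have heq : ∀ x, (∫ t in x..x₁, a t) = -∫ t in x₁..x, a t := fun x =>
      intervalIntegral.integral_symm x₁ x
    exact this.neg.congr fun x => (heq x).symm
  -- dualHardyOp a = F
  have hFeq : ∀ x : ℝ, dualHardyOp a x = F x := by
    intro x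
    by_cases hx : x ≤ x₁
    · have hsplit : Ioc x x₁ ∪ Ioi x₁ = Ioi x := Ioc_union_Ioi_eq_Ioi hx
      have hdisj : Disjoint (Ioc x x₁) (Ioi x₁) := by
        apply disjoint_left.2
        intro t ht ht'
        exact absurd ht.2 (not_le.2 ht')
      have h1 : ∫ t in Ioi x₁, a t = 0 := by
        apply setIntegral_eq_zero_of_forall_eq_zero
        intro t ht
        exact hsupp t (fun h => absurd h.2 (not_lt.2 (le_of_lt ht)))
      have := setIntegral_union hdisj measurableSet_Ioi
        (haInt.integrableOn) (haInt.integrableOn) (f := a) (μ := volume)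
      rw [hsplit] at this
      have hFx : F x = ∫ t in Ioc x x₁, a t := intervalIntegral.integral_of_le hx
      rw [dualHardyOp, this, h1, hFx, add_zero]
    · push_neg at hx
      have h1 : dualHardyOp a x = 0 := by
        apply setIntegral_eq_zero_of_forall_eq_zero
        intro t ht
        exact hsupp t (fun h => absurd h.2 (not_lt.2 (le_of_lt (lt_trans hx ht))))
      have h2 : F x = 0 := by
        rw [hF]
        simp only []
        rw [intervalIntegral.integral_symm, intervalIntegral.integral_of_le (le_of_lt hx)]
        rw [neg_eq_zero]
        apply setIntegral_eq_zero_of_forall_eq_zero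
        intro t ht
        exact hsupp t (fun h => absurd h.2 (not_lt.2 (le_of_lt ht.1)))
      rw [h1, h2]
  -- F vanishes outside Ioo x₀ x₁
  have hF0 : ∀ x ∉ Ioo x₀ x₁, F x = 0 := by
    intro x hx
    rcases not_and_or.1 (fun hc => hx (mem_Ioo.2 hc)) with h | h
    · push_neg at h
      -- x ≤ x₀ : F x = whole integral = 0
      have h1 : F x = ∫ t, a t := by
        rw [hF]; simp only []
        rw [intervalIntegral.integral_of_le (by linarith)]
        apply setIntegral_eq_integral_of_forall_compl_eq_zero
        intro t ht
        apply hsupp t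
        intro hmem'
        exact ht ⟨by linarith [hmem'.1], le_of_lt hmem'.2⟩
      have h2 : (∫ t, a t) = ∫ t in Ioi (0:ℝ), a t := by
        symm
        apply setIntegral_eq_integral_of_forall_compl_eq_zero
        intro t ht
        apply hsupp t
        intro hmem'
        exact ht (lt_trans h0 hmem'.1)
      rw [h1, h2, hvanish]
    · push_neg at h
      -- x₁ ≤ x
      rw [hF]; simp only []
      rw [intervalIntegral.integral_symm, intervalIntegral.integral_of_le h, neg_eq_zero]
      apply setIntegral_eq_zero_of_forall_eq_zero
      intro t ht
      exact hsupp t (fun hm => absurd hm.2 (not_lt.2 (le_of_lt ht.1)))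
  -- a.e. bound on |a|
  have hbound : ∀ᵐ x ∂volume, ‖a x‖ ≤ C := by
    have h1 : ∀ᵐ x ∂(volume.restrict (Ioi (0:ℝ))), ‖a x‖ ≤ C := by
      have h2 := enorm_ae_le_eLpNormEssSup a (volume.restrict (Ioi (0:ℝ)))
      rw [← eLpNorm_exponent_top] at h2
      filter_upwards [h2] with x hx
      have h3 : ENNReal.ofReal ‖a x‖ ≤ ENNReal.ofReal C := by
        rw [ofReal_norm]; exact le_trans hx hsize
      rwa [ENNReal.ofReal_le_ofReal_iff (le_of_lt hCpos)] at h3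
    rw [ae_restrict_iff' measurableSet_Ioi] at h1
    filter_upwards [h1] with x hx
    by_cases hx0 : x ∈ Ioi (0:ℝ)
    · exact hx hx0
    · have : a x = 0 := hsupp x (fun h => hx0 (lt_trans h0 h.1))
      rw [this]; simp [le_of_lt hCpos]
  -- pointwise bound of F on Ioo x₀ x₁
  have hFbd : ∀ x ∈ Ioo x₀ x₁, |F x| ≤ C * (x₁ - x) := by
    intro x hx
    have hx1 : x ≤ x₁ := le_of_lt hx.2
    have hFx : F x = ∫ t in Ioc x x₁, a t := intervalIntegral.integral_of_le hx1
    have hvol : volume (Ioc x x₁) < ⊤ := by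
      rw [Real.volume_Ioc]; exact ENNReal.ofReal_lt_top
    have := norm_setIntegral_le_of_norm_le_const_ae (μ := volume) (s := Ioc x x₁)
      (f := a) hvol (ae_restrict_of_ae hbound)
    rw [Real.volume_real_Ioc_of_le hx1] at this
    rw [hFx]
    calc |∫ t in Ioc x x₁, a t| ≤ C * (x₁ - x) := this
      _ = C * (x₁ - x) := rfl
  -- rewrite the integral using F, then restrict to Ioo x₀ x₁
  have hstep1 : (∫ x in Ioi (0:ℝ), |dualHardyOp a x| ^ p)
      = ∫ x in Ioo x₀ x₁, |F x| ^ p := by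
    have e1 : (∫ x in Ioi (0:ℝ), |dualHardyOp a x| ^ p)
        = ∫ x in Ioi (0:ℝ), |F x| ^ p := by
      apply setIntegral_congr_fun measurableSet_Ioi
      intro x _
      dsimp only
      rw [hFeq x]
    have e2 : (∫ x in Ioi (0:ℝ), |F x| ^ p)
        = ∫ x in Ioi (0:ℝ), (Ioo x₀ x₁).indicator (fun x => |F x| ^ p) x := by
      apply setIntegral_congr_fun measurableSet_Ioi
      intro x _
      dsimp only
      by_cases hx : x ∈ Ioo x₀ x₁
      · rw [indicator_of_mem hx]
      · rw [indicator_of_notMem hx, hF0 x hx, abs_zero, Real.zero_rpow hp0']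
    have hinter : Ioi (0:ℝ) ∩ Ioo x₀ x₁ = Ioo x₀ x₁ :=
      inter_eq_right.2 (fun x hx => lt_trans h0 hx.1)
    rw [e1, e2, setIntegral_indicator measurableSet_Ioo, hinter]
  rw [hstep1]
  -- integrability of both integrands on Ioo
  have hcontg : Continuous fun x => |F x| ^ p :=
    (hFcont.abs).rpow_const (fun x => Or.inr (le_of_lt hp0))
  have hconth : Continuous fun x => C * (x₁ - x) ^ p := by
    apply Continuous.mul continuous_const
    exact ((continuous_const.sub continuous_id).rpow_const (fun x => Or.inr (le_of_lt hp0)))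
  have hintg : IntegrableOn (fun x => |F x| ^ p) (Ioo x₀ x₁) :=
    (hcontg.integrableOn_Icc (a := x₀) (b := x₁)).mono_set Ioo_subset_Icc_self
  have hinth : IntegrableOn (fun x => C ^ p * (x₁ - x) ^ p) (Ioo x₀ x₁) := by
    have hc : Continuous fun x : ℝ => C ^ p * (x₁ - x) ^ p :=
      continuous_const.mul
        ((continuous_const.sub continuous_id).rpow_const (fun x => Or.inr (le_of_lt hp0)))
    exact (hc.integrableOn_Icc (a := x₀) (b := x₁)).mono_set Ioo_subset_Icc_self
  -- comparison
  have hcomp : (∫ x in Ioo x₀ x₁, |F x| ^ p)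
      ≤ ∫ x in Ioo x₀ x₁, C ^ p * (x₁ - x) ^ p := by
    apply setIntegral_mono_on hintg hinth measurableSet_Ioo
    intro x hx
    have h1 : |F x| ≤ C * (x₁ - x) := hFbd x hx
    have h2 : |F x| ^ p ≤ (C * (x₁ - x)) ^ p :=
      Real.rpow_le_rpow (abs_nonneg _) h1 (le_of_lt hp0)
    rwa [Real.mul_rpow (le_of_lt hCpos) (by linarith [hx.2])] at h2
  -- compute the RHS
  have hval : (∫ x in Ioo x₀ x₁, C ^ p * (x₁ - x) ^ p)
      = C ^ p * ((x₁ - x₀) ^ (p + 1) / (p + 1)) := by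
    rw [← integral_Ioc_eq_integral_Ioo,
      ← intervalIntegral.integral_of_le (le_of_lt h01)]
    rw [intervalIntegral.integral_const_mul]
    congr 1
    have hcs := intervalIntegral.integral_comp_sub_left
      (a := x₀) (b := x₁) (fun u => u ^ p) x₁
    rw [hcs, sub_self]
    rw [integral_rpow (Or.inl (by linarith))]
    rw [Real.zero_rpow (by linarith : p + 1 ≠ 0)]
    ring
  rw [hval] at hcomp
  -- final numeric estimate
  have hCp : C ^ p = M⁻¹ := by
    rw [hC, ← Real.rpow_mul (le_of_lt hMpos)]
    rw [show -(1/p) * p = -1 by field_simp]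
    rw [Real.rpow_neg_one]
  have hstrict : (x₁ - x₀) ^ (p + 1) < x₁ ^ (p + 1) - x₀ ^ (p + 1) := by
    have := rpow_strict_superadd (u := x₁ - x₀) (v := x₀) (r := p + 1)
      (by linarith) h0 (by linarith)
    rw [sub_add_cancel] at this
    linarith
  have hfinal : C ^ p * ((x₁ - x₀) ^ (p + 1) / (p + 1)) < 1 := by
    rw [hCp, hMval, inv_div, div_mul_div_comm,
      div_lt_one (mul_pos (by linarith) hp1pos)]
    nlinarith [mul_lt_mul_of_pos_left hstrict hp1pos]
  calc (∫ x in Ioo x₀ x₁, |F x| ^ p) ≤ C ^ p * ((x₁ - x₀) ^ (p + 1) / (p + 1)) := hcomp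
    _ < 1 := hfinal
end

section
/- Let 0 < p < 1. Let a : (0,∞) → ℝ satisfy supp a ⊆ (x₀,x₁) with 0 < x₀ < x₁, ∫_{x₀}^{x₁} |a(t)| t^p dt ≤ (∫_{x₀}^{x₁} t^p dt)^(1 - 1/p), and ∫ a(t) dt = 0. Then ∫₀^∞ |H*a(x)|^p dx < 1/((1-p)(1+p)^p). -/
open MeasureTheory Set

/-- Strict concavity-type inequality: for `0 < v < u` and `0 < s < 1`,
`u^s < (u-v)^s + v^s`. -/
lemma key_strict_rpow {u v s : ℝ} (hv : 0 < v) (hvu : v < u) (hs0 : 0 < s) (hs1 : s < 1) :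
    u ^ s < (u - v) ^ s + v ^ s := by
  have hu : 0 < u := hv.trans hvu
  have hw : 0 < u - v := by linarith
  have h1 : u ^ (s - 1) < (u - v) ^ (s - 1) :=
    Real.rpow_lt_rpow_of_neg hw (by linarith) (by linarith)
  have h2 : u ^ (s - 1) < v ^ (s - 1) :=
    Real.rpow_lt_rpow_of_neg hv hvu (by linarith)
  have e1 : (u - v) ^ (s - 1) * (u - v) = (u - v) ^ s := by
    rw [← Real.rpow_add_one hw.ne' (s - 1)]; ring_nf
  have e2 : v ^ (s - 1) * v = v ^ s := by
    rw [← Real.rpow_add_one hv.ne' (s - 1)]; ring_nf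
  have e3 : u ^ (s - 1) * u = u ^ s := by
    rw [← Real.rpow_add_one hu.ne' (s - 1)]; ring_nf
  have hsplit : u ^ (s - 1) * u = u ^ (s - 1) * (u - v) + u ^ (s - 1) * v := by ring
  calc u ^ s = u ^ (s - 1) * (u - v) + u ^ (s - 1) * v := by rw [← e3, hsplit]
    _ < (u - v) ^ (s - 1) * (u - v) + v ^ (s - 1) * v := by
        apply add_lt_add
        · exact mul_lt_mul_of_pos_right h1 hw
        · exact mul_lt_mul_of_pos_right h2 hv
    _ = (u - v) ^ s + v ^ s := by rw [e1, e2]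

theorem weighted_atom_estimate_dualHardyOp_q_one (p : ℝ) (hp0 : 0 < p) (hp1 : p < 1)
    (x₀ x₁ : ℝ) (h0 : 0 < x₀) (h01 : x₀ < x₁) (a : ℝ → ℝ)
    (hsupp : ∀ x, x ∉ Ioo x₀ x₁ → a x = 0)
    (hint : IntegrableOn a (Ioi (0:ℝ)))
    (hsize : ∫ t in x₀..x₁, |a t| * t ^ p ≤ (∫ t in x₀..x₁, t ^ p) ^ (1 - 1/p))
    (hvanish : ∫ t in Ioi (0:ℝ), a t = 0) :
    ∫ x in Ioi (0:ℝ), |dualHardyOp a x| ^ p < 1 / ((1 - p) * (1 + p) ^ p) := by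
  have h1 : 0 < x₁ := h0.trans h01
  set S := ∫ t in x₀..x₁, |a t| * t ^ p with hS_def
  set I := ∫ t in x₀..x₁, t ^ p with hI_def
  have hI_val : I = (x₁ ^ (p + 1) - x₀ ^ (p + 1)) / (p + 1) := by
    rw [hI_def, integral_rpow (Or.inl (by linarith))]
  set u := x₁ ^ (p + 1) with hu_def
  set v := x₀ ^ (p + 1) with hv_def
  have hv : 0 < v := Real.rpow_pos_of_pos h0 _
  have hvu : v < u := Real.rpow_lt_rpow h0.le h01 (by linarith)
  have hI_pos : 0 < I := by rw [hI_val]; exact div_pos (by linarith) (by linarith)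
  -- F := |a t| * t ^ p
  set F : ℝ → ℝ := fun t => |a t| * t ^ p with hF_def
  have hFnn : ∀ t, 0 ≤ F t := by
    intro t
    rcases le_or_gt 0 t with h | h
    · exact mul_nonneg (abs_nonneg _) (Real.rpow_nonneg h _)
    · have : a t = 0 := hsupp t (fun ht => absurd ht.1 (by linarith))
      simp [hF_def, this]
  have haint₀ : IntegrableOn a (Ioi x₀) := hint.mono_set (Ioi_subset_Ioi h0.le)
  have hF_int : IntegrableOn F (Ioi x₀) := by
    apply Integrable.mono' ((haint₀.abs).const_mul (x₁ ^ p))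
    · exact (haint₀.abs).aestronglyMeasurable.mul
        ((Real.continuous_rpow_const hp0.le).aestronglyMeasurable.restrict)
    · filter_upwards with t
      rw [Real.norm_of_nonneg (hFnn t)]
      rcases Classical.em (t ∈ Ioo x₀ x₁) with ht | ht
      · have h1t : (0:ℝ) < t := h0.trans ht.1
        have htp : t ^ p ≤ x₁ ^ p := Real.rpow_le_rpow h1t.le ht.2.le hp0.le
        calc F t = |a t| * t ^ p := rfl
          _ ≤ |a t| * x₁ ^ p := mul_le_mul_of_nonneg_left htp (abs_nonneg _)
          _ = x₁ ^ p * |a t| := mul_comm _ _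
      · have ha0 : a t = 0 := hsupp t ht
        simp [hF_def, ha0]
  -- ∫ F on Ioi x₀ equals S
  have hF_eq_S : ∫ t in Ioi x₀, F t = S := by
    rw [setIntegral_eq_of_subset_of_forall_diff_eq_zero measurableSet_Ioi
      (Ioo_subset_Ioi_self : Ioo x₀ x₁ ⊆ Ioi x₀)
      (fun t ht => by simp [hF_def, hsupp t ht.2])]
    rw [hS_def, intervalIntegral.integral_of_le h01.le, integral_Ioc_eq_integral_Ioo]
  have hS_nonneg : 0 ≤ S := by
    rw [← hF_eq_S]
    exact setIntegral_nonneg measurableSet_Ioi (fun t _ => hFnn t)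
  -- pointwise bound on Ioo x₀ x₁
  have hbd : ∀ x ∈ Ioo x₀ x₁, |dualHardyOp a x| ^ p ≤ I ^ (p - 1) * x ^ (-p * p) := by
    intro x hx
    have hx0 : 0 < x := h0.trans hx.1
    have habs : |dualHardyOp a x| ≤ ∫ t in Ioi x, |a t| := by
      rw [dualHardyOp]
      simpa using norm_integral_le_integral_norm (μ := volume.restrict (Ioi x)) a
    have hstep1 : ∫ t in Ioi x, |a t| ≤ ∫ t in Ioi x, x ^ (-p) * F t := by
      apply integral_mono_of_nonneg
      · filter_upwards with t using abs_nonneg _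
      · exact (hF_int.mono_set (Ioi_subset_Ioi hx.1.le)).const_mul _
      · filter_upwards [ae_restrict_mem measurableSet_Ioi] with t ht
        have htx : x < t := ht
        have hxp : 0 < x ^ p := Real.rpow_pos_of_pos hx0 _
        have hle1 : x ^ p ≤ t ^ p := Real.rpow_le_rpow hx0.le htx.le hp0.le
        have hone : (1:ℝ) ≤ x ^ (-p) * t ^ p := by
          rw [Real.rpow_neg hx0.le, inv_mul_eq_div, le_div_iff₀ hxp]
          simpa using hle1
        calc |a t| = |a t| * 1 := (mul_one _).symm
          _ ≤ |a t| * (x ^ (-p) * t ^ p) := mul_le_mul_of_nonneg_left hone (abs_nonneg _)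
          _ = x ^ (-p) * F t := by rw [hF_def]; ring
    have hstep2 : ∫ t in Ioi x, x ^ (-p) * F t ≤ x ^ (-p) * S := by
      rw [integral_const_mul, ← hF_eq_S]
      apply mul_le_mul_of_nonneg_left _ (Real.rpow_nonneg hx0.le _)
      apply setIntegral_mono_set hF_int
      · filter_upwards with t using hFnn t
      · exact HasSubset.Subset.eventuallyLE (Ioi_subset_Ioi hx.1.le)
    have hH : |dualHardyOp a x| ≤ x ^ (-p) * S := le_trans habs (le_trans hstep1 hstep2)
    have hexp : (1 - 1/p) * p = p - 1 := by
      rw [sub_mul, one_mul, one_div, inv_mul_cancel₀ hp0.ne']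
    calc |dualHardyOp a x| ^ p ≤ (x ^ (-p) * S) ^ p :=
          Real.rpow_le_rpow (abs_nonneg _) hH hp0.le
      _ = (x ^ (-p)) ^ p * S ^ p :=
          Real.mul_rpow (Real.rpow_nonneg hx0.le _) hS_nonneg
      _ = x ^ (-p * p) * S ^ p := by rw [← Real.rpow_mul hx0.le]
      _ ≤ x ^ (-p * p) * I ^ (p - 1) := by
          apply mul_le_mul_of_nonneg_left _ (Real.rpow_nonneg hx0.le _)
          calc S ^ p ≤ (I ^ (1 - 1/p)) ^ p :=
                Real.rpow_le_rpow hS_nonneg hsize hp0.le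
            _ = I ^ ((1 - 1/p) * p) := by rw [← Real.rpow_mul hI_pos.le]
            _ = I ^ (p - 1) := by rw [hexp]
      _ = I ^ (p - 1) * x ^ (-p * p) := mul_comm _ _
  -- dualHardyOp vanishes outside (x₀, x₁)
  have hvanish' : ∀ x ∈ Ioi (0:ℝ) \ Ioo x₀ x₁, |dualHardyOp a x| ^ p = 0 := by
    intro x hx
    have hx0 : (0:ℝ) < x := hx.1
    have hcase : x ≤ x₀ ∨ x₁ ≤ x := by
      by_contra h
      push_neg at h
      exact hx.2 ⟨h.1, h.2⟩
    have hH0 : dualHardyOp a x = 0 := by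
      rcases hcase with h | h
      · rw [dualHardyOp, ← hvanish]
        symm
        apply setIntegral_eq_of_subset_of_forall_diff_eq_zero measurableSet_Ioi
          (Ioi_subset_Ioi hx0.le)
        intro t ht
        apply hsupp
        intro htt
        have htx : t ≤ x := not_lt.mp ht.2
        exact absurd htt.1 (not_lt.mpr (htx.trans h))
      · rw [dualHardyOp]
        rw [setIntegral_congr_fun measurableSet_Ioi
          (fun t ht => hsupp t (fun htt => absurd htt.2 (not_lt.mpr (h.trans ht.le))))]
        simp
    rw [hH0, abs_zero, Real.zero_rpow hp0.ne']
  -- reduce to the interval (x₀, x₁)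
  have hmain : ∫ x in Ioi (0:ℝ), |dualHardyOp a x| ^ p
      = ∫ x in Ioo x₀ x₁, |dualHardyOp a x| ^ p :=
    setIntegral_eq_of_subset_of_forall_diff_eq_zero measurableSet_Ioi
      (fun x hx => h0.trans hx.1) hvanish'
  set g : ℝ → ℝ := fun x => I ^ (p - 1) * x ^ (-p * p) with hg_def
  have hg_int : IntegrableOn g (Ioo x₀ x₁) := by
    have hcont : ContinuousOn g (Icc x₀ x₁) := by
      exact ContinuousOn.mul continuousOn_const
        (continuousOn_id.rpow_const (fun x hx => Or.inl (ne_of_gt (h0.trans_le hx.1))))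
    exact (hcont.integrableOn_compact isCompact_Icc).mono_set Ioo_subset_Icc_self
  have hle : ∫ x in Ioo x₀ x₁, |dualHardyOp a x| ^ p ≤ ∫ x in Ioo x₀ x₁, g x := by
    apply integral_mono_of_nonneg
    · filter_upwards with x using Real.rpow_nonneg (abs_nonneg _) _
    · exact hg_int
    · filter_upwards [ae_restrict_mem measurableSet_Ioo] with x hx using hbd x hx
  have hg_val : ∫ x in Ioo x₀ x₁, g x
      = I ^ (p - 1) * ((x₁ ^ (-p * p + 1) - x₀ ^ (-p * p + 1)) / (-p * p + 1)) := by
    rw [← integral_Ioc_eq_integral_Ioo, ← intervalIntegral.integral_of_le h01.le, hg_def]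
    rw [intervalIntegral.integral_const_mul, integral_rpow (Or.inl (by nlinarith))]
  -- final strict inequality
  set s : ℝ := 1 - p with hs_def
  have hs0 : 0 < s := by rw [hs_def]; linarith
  have hs1 : s < 1 := by rw [hs_def]; linarith
  have hx1pow : x₁ ^ (-p * p + 1) = u ^ s := by
    rw [hu_def, ← Real.rpow_mul h1.le]
    congr 1
    rw [hs_def]; ring
  have hx0pow : x₀ ^ (-p * p + 1) = v ^ s := by
    rw [hv_def, ← Real.rpow_mul h0.le]
    congr 1
    rw [hs_def]; ring
  have hA : 0 < (u - v) ^ s := Real.rpow_pos_of_pos (by linarith) _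
  have hB_lt : u ^ s - v ^ s < (u - v) ^ s := by
    have := key_strict_rpow hv hvu hs0 hs1
    linarith
  have hC : 0 < (1 + p) ^ (p - 1) := Real.rpow_pos_of_pos (by linarith) _
  have h1p : (1 + p) ^ p = (1 + p) ^ (p - 1) * (1 + p) := by
    have := Real.rpow_add_one (x := 1 + p) (by positivity : (1:ℝ) + p ≠ 0) (p - 1)
    simpa using this
  have hIp : I ^ (p - 1) = ((u - v) ^ s)⁻¹ / (1 + p) ^ (p - 1) := by
    rw [hI_val]
    have hpe : p + 1 = 1 + p := by ring
    rw [hpe, Real.div_rpow (by linarith) (by linarith)]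
    congr 1
    rw [← Real.rpow_neg (by linarith : (0:ℝ) ≤ u - v)]
    congr 1
    rw [hs_def]; ring
  set K : ℝ := (1 - p) * ((1 + p) ^ (p - 1) * (1 + p)) with hK_def
  have hK : 0 < K := by
    rw [hK_def]
    have : (0:ℝ) < 1 + p := by linarith
    positivity
  have hRHS : 1 / ((1 - p) * (1 + p) ^ p) = 1 / K := by rw [h1p, hK_def]
  have hLHS_eq : I ^ (p - 1) * ((x₁ ^ (-p * p + 1) - x₀ ^ (-p * p + 1)) / (-p * p + 1))
      = (u ^ s - v ^ s) / ((u - v) ^ s * K) := by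
    rw [hx1pow, hx0pow, hIp]
    have hden : -p * p + 1 = (1 - p) * (1 + p) := by ring
    rw [hden, hK_def]
    field_simp
  have hfinal : (u ^ s - v ^ s) / ((u - v) ^ s * K) < 1 / K := by
    rw [div_lt_div_iff₀ (by positivity) hK]
    have := mul_lt_mul_of_pos_right hB_lt hK
    nlinarith
  calc ∫ x in Ioi (0:ℝ), |dualHardyOp a x| ^ p
      = ∫ x in Ioo x₀ x₁, |dualHardyOp a x| ^ p := hmain
    _ ≤ ∫ x in Ioo x₀ x₁, g x := hle
    _ = I ^ (p - 1) * ((x₁ ^ (-p * p + 1) - x₀ ^ (-p * p + 1)) / (-p * p + 1)) := hg_val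
    _ = (u ^ s - v ^ s) / ((u - v) ^ s * K) := hLHS_eq
    _ < 1 / K := hfinal
    _ = 1 / ((1 - p) * (1 + p) ^ p) := hRHS.symm
end

section
/- Let 0 < x₀ < x₁, s ∈ ℕ, and let a : (0,∞) → ℝ be supported in (x₀,x₁) with ∫ a(x) x^β dx = 0 for β = 0,…,s and ∫ a(x) ln x dx = 0. Then for every integer β with 0 ≤ β ≤ s, ∫₀^∞ x^β Ha(x) dx = 0, where Ha(x) = (1/x)∫₀^x a(t) dt. -/
open MeasureTheory Set

theorem hardyOp_moments (x₀ x₁ : ℝ) (h0 : 0 < x₀) (h01 : x₀ < x₁) (s : ℕ)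
    (a : ℝ → ℝ) (hsupp : ∀ x, x ∉ Ioo x₀ x₁ → a x = 0)
    (hint : IntegrableOn a (Ioi (0:ℝ)))
    (hmom : ∀ β : ℕ, β ≤ s → ∫ t in Ioi (0:ℝ), a t * t ^ β = 0)
    (hlog : ∫ t in Ioi (0:ℝ), a t * Real.log t = 0) :
    ∀ β : ℕ, β ≤ s → ∫ x in Ioi (0:ℝ), x ^ β * hardyOp a x = 0 := by
  intro β hβ
  have h1pos : (0:ℝ) < x₁ := h0.trans h01
  have hSx : Ioo x₀ x₁ ⊆ Ioi (0:ℝ) := fun x hx => h0.trans hx.1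
  have haS : IntegrableOn a (Ioo x₀ x₁) := hint.mono_set hSx
  -- restrict moment integrals from `Ioi 0` to `Ioo x₀ x₁`
  have hres : ∀ g : ℝ → ℝ,
      ∫ t in Ioi (0:ℝ), a t * g t = ∫ t in Ioo x₀ x₁, a t * g t := by
    intro g
    apply setIntegral_eq_of_subset_of_forall_diff_eq_zero measurableSet_Ioi hSx
    intro t ht
    rw [hsupp t ht.2, zero_mul]
  have hmomS : ∀ γ : ℕ, γ ≤ s → ∫ t in Ioo x₀ x₁, a t * t ^ γ = 0 := by
    intro γ hγ
    have := (hres fun t => t ^ γ).symm.trans (hmom γ hγ)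
    exact this
  have hlogS : ∫ t in Ioo x₀ x₁, a t * Real.log t = 0 :=
    ((hres fun t => Real.log t).symm.trans hlog)
  have haS0 : ∫ t in Ioo x₀ x₁, a t = 0 := by
    simpa using hmomS 0 (Nat.zero_le s)
  -- the integrand vanishes outside `Ioo x₀ x₁`
  have hout : ∀ x ∈ Ioi (0:ℝ) \ Ioo x₀ x₁, x ^ β * hardyOp a x = 0 := by
    intro x hx
    have hinner : ∫ t in Ioo (0:ℝ) x, a t = 0 := by
      rcases le_or_gt x x₀ with h | h
      · refine setIntegral_eq_zero_of_forall_eq_zero fun t ht => hsupp t fun hts => ?_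
        exact absurd (ht.2.trans_le h) (not_lt.2 hts.1.le)
      · have hx1 : x₁ ≤ x := by
          by_contra hc
          exact hx.2 ⟨h, lt_of_not_ge hc⟩
        have h2 : ∫ t in Ioi (0:ℝ), a t = ∫ t in Ioo (0:ℝ) x, a t := by
          refine setIntegral_eq_of_subset_of_forall_diff_eq_zero measurableSet_Ioi
            (fun t ht => ht.1) fun t ht => hsupp t fun hts => ?_
          exact ht.2 ⟨ht.1, hts.2.trans_le hx1⟩
        have h3 : ∫ t in Ioi (0:ℝ), a t = 0 := by simpa using hmom 0 (Nat.zero_le s)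
        rw [← h2, h3]
    simp [hardyOp, hinner]
  rw [setIntegral_eq_of_subset_of_forall_diff_eq_zero measurableSet_Ioi hSx hout]
  -- rewrite the integrand on `Ioo x₀ x₁` as an inner integral over `Ioo x₀ x₁`
  have hcong : ∀ x ∈ Ioo x₀ x₁, x ^ β * hardyOp a x
      = ∫ t in Ioo x₀ x₁, (x ^ β / x) * (Ioo x₀ x).indicator a t := by
    intro x hx
    have hx0 : (0:ℝ) < x := h0.trans hx.1
    have h1 : ∫ t in Ioo (0:ℝ) x, a t = ∫ t in Ioo x₀ x, a t := by
      refine setIntegral_eq_of_subset_of_forall_diff_eq_zero measurableSet_Ioo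
        (fun t ht => ⟨h0.trans ht.1, ht.2⟩) fun t ht => hsupp t fun hts => ?_
      exact ht.2 ⟨hts.1, ht.1.2⟩
    have h2 : ∫ t in Ioo x₀ x₁, (Ioo x₀ x).indicator a t = ∫ t in Ioo x₀ x, a t := by
      rw [setIntegral_indicator measurableSet_Ioo]
      congr 1
      rw [inter_eq_right.2 (Ioo_subset_Ioo le_rfl hx.2.le)]
    rw [integral_const_mul, h2, hardyOp, h1]
    ring
  rw [setIntegral_congr_fun measurableSet_Ioo hcong]
  -- Fubini
  have hbound : ∀ x ∈ Ioo x₀ x₁, ‖x ^ β / x‖ ≤ x₁ ^ β / x₀ := by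
    intro x hx
    have hx0 : (0:ℝ) < x := h0.trans hx.1
    rw [Real.norm_eq_abs, abs_of_nonneg (by positivity)]
    exact div_le_div₀ (by positivity) (pow_le_pow_left₀ hx0.le hx.2.le β) h0 hx.1.le
  have hC : IntegrableOn (fun x : ℝ => x ^ β / x) (Ioo x₀ x₁) := by
    refine Measure.integrableOn_of_bounded (M := x₁ ^ β / x₀) (by simp) ?_ ?_
    · exact ((measurable_id.pow_const β).div measurable_id).aestronglyMeasurable
    · exact (ae_restrict_iff' measurableSet_Ioo).2 (Filter.Eventually.of_forall hbound)
  have hG : Integrable (fun p : ℝ × ℝ => (p.1 ^ β / p.1) * a p.2)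
      ((volume.restrict (Ioo x₀ x₁)).prod (volume.restrict (Ioo x₀ x₁))) :=
    hC.mul_prod haS
  have hM : MeasurableSet {p : ℝ × ℝ | x₀ < p.2 ∧ p.2 < p.1} :=
    (measurableSet_lt measurable_const measurable_snd).inter
      (measurableSet_lt measurable_snd measurable_fst)
  have hF : Integrable
      (Function.uncurry fun x t => (x ^ β / x) * (Ioo x₀ x).indicator a t)
      ((volume.restrict (Ioo x₀ x₁)).prod (volume.restrict (Ioo x₀ x₁))) := by
    have heq : (Function.uncurry fun x t => (x ^ β / x) * (Ioo x₀ x).indicator a t)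
        = ({p : ℝ × ℝ | x₀ < p.2 ∧ p.2 < p.1}).indicator
            (fun p => (p.1 ^ β / p.1) * a p.2) := by
      ext p
      by_cases h : x₀ < p.2 ∧ p.2 < p.1
      · simp [Function.uncurry, Set.indicator, Set.mem_Ioo, h]
      · simp [Function.uncurry, Set.indicator, Set.mem_Ioo, h]
    rw [heq]
    exact hG.indicator hM
  rw [integral_integral_swap hF]
  -- compute the inner integral
  have hswap : ∀ t ∈ Ioo x₀ x₁,
      (∫ x in Ioo x₀ x₁, (x ^ β / x) * (Ioo x₀ x).indicator a t)
        = a t * ∫ x in Ioo t x₁, x ^ β / x := by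
    intro t ht
    have hpt : ∀ x ∈ Ioo x₀ x₁, (x ^ β / x) * (Ioo x₀ x).indicator a t
        = (Ioi t).indicator (fun x => (x ^ β / x) * a t) x := by
      intro x hx
      by_cases hxt : t < x
      · simp [Set.indicator_apply, mem_Ioo, mem_Ioi, hxt, ht.1]
      · simp [Set.indicator_apply, mem_Ioo, mem_Ioi, hxt]
    rw [setIntegral_congr_fun measurableSet_Ioo hpt,
      setIntegral_indicator measurableSet_Ioi]
    have hss : Ioo x₀ x₁ ∩ Ioi t = Ioo t x₁ := by
      ext x
      simp only [mem_inter_iff, mem_Ioo, mem_Ioi]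
      exact ⟨fun h => ⟨h.2, h.1.2⟩, fun h => ⟨⟨ht.1.trans h.1, h.2⟩, h.1⟩⟩
    rw [hss, integral_mul_const, mul_comm]
  rw [setIntegral_congr_fun measurableSet_Ioo hswap]
  -- evaluate `∫ x in Ioo t x₁, x ^ β / x`
  have hIoo : ∀ t ∈ Ioo x₀ x₁, (∫ x in Ioo t x₁, x ^ β / x)
      = ∫ x in t..x₁, x ^ β / x := by
    intro t ht
    rw [intervalIntegral.integral_of_le ht.2.le, integral_Ioc_eq_integral_Ioo]
  rcases Nat.eq_zero_or_pos β with hb0 | hbpos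
  · -- β = 0 : logarithmic case
    subst hb0
    have hval : ∀ t ∈ Ioo x₀ x₁,
        a t * (∫ x in Ioo t x₁, x ^ 0 / x)
          = a t * Real.log x₁ - a t * Real.log t := by
      intro t ht
      have ht0 : (0:ℝ) < t := h0.trans ht.1
      rw [hIoo t ht]
      have : ∫ x in t..x₁, x ^ 0 / x = ∫ x in t..x₁, 1 / x := by
        simp
      rw [this, integral_one_div]
      · rw [Real.log_div h1pos.ne' ht0.ne']
        ring
      · intro h
        rcases h with h
        have := h.1
        have hmin : 0 < min t x₁ := lt_min ht0 h1pos
        simp only [Set.uIcc_of_le ht.2.le] at h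
        exact absurd h.1 (not_le.2 ht0)
    rw [setIntegral_congr_fun measurableSet_Ioo hval]
    have hi1 : Integrable (fun t => a t * Real.log x₁) (volume.restrict (Ioo x₀ x₁)) :=
      haS.mul_const _
    have hi2 : Integrable (fun t => a t * Real.log t) (volume.restrict (Ioo x₀ x₁)) := by
      have : Integrable (fun t => Real.log t * a t) (volume.restrict (Ioo x₀ x₁)) := by
        refine haS.bdd_mul (c := max |Real.log x₀| |Real.log x₁|)
          Real.measurable_log.aestronglyMeasurable ?_
        refine (ae_restrict_iff' measurableSet_Ioo).2 (Filter.Eventually.of_forall ?_)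
        intro t ht
        have ht0 : (0:ℝ) < t := h0.trans ht.1
        rw [Real.norm_eq_abs]
        rcases le_or_gt 0 (Real.log t) with h | h
        · refine le_max_of_le_right ?_
          rw [abs_of_nonneg h]
          exact (Real.log_le_log ht0 ht.2.le).trans (le_abs_self _)
        · refine le_max_of_le_left ?_
          rw [abs_of_neg h]
          have : Real.log x₀ ≤ Real.log t := Real.log_le_log h0 ht.1.le
          have h2 : -Real.log t ≤ -Real.log x₀ := neg_le_neg this
          exact h2.trans (neg_le_abs _)
      simpa [mul_comm] using this
    rw [integral_sub hi1 hi2, hlogS, integral_mul_const, haS0]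
    simp
  · -- β ≥ 1 : polynomial case
    obtain ⟨m, rfl⟩ : ∃ m, β = m + 1 := ⟨β - 1, (Nat.succ_pred_eq_of_pos hbpos).symm⟩
    have hval : ∀ t ∈ Ioo x₀ x₁,
        a t * (∫ x in Ioo t x₁, x ^ (m + 1) / x)
          = (a t * (x₁ ^ (m + 1) / (m + 1)) - a t * t ^ (m + 1) / (m + 1)) := by
      intro t ht
      have ht0 : (0:ℝ) < t := h0.trans ht.1
      rw [hIoo t ht]
      have hcg : ∫ x in t..x₁, x ^ (m + 1) / x = ∫ x in t..x₁, x ^ m := by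
        refine intervalIntegral.integral_congr fun x hx => ?_
        have hx0 : (0:ℝ) < x := by
          simp only [Set.uIcc_of_le ht.2.le] at hx
          exact lt_of_lt_of_le ht0 hx.1
        field_simp [pow_succ]
        ring
      rw [hcg, integral_pow]
      field_simp
    rw [setIntegral_congr_fun measurableSet_Ioo hval]
    have hi1 : Integrable (fun t => a t * (x₁ ^ (m + 1) / (m + 1)))
        (volume.restrict (Ioo x₀ x₁)) := haS.mul_const _
    have hi2 : Integrable (fun t => a t * t ^ (m + 1) / (m + 1))
        (volume.restrict (Ioo x₀ x₁)) := by
      have : Integrable (fun t => t ^ (m + 1) * a t) (volume.restrict (Ioo x₀ x₁)) := by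
        refine haS.bdd_mul (c := x₁ ^ (m + 1))
          (measurable_id.pow_const _).aestronglyMeasurable ?_
        refine (ae_restrict_iff' measurableSet_Ioo).2 (Filter.Eventually.of_forall ?_)
        intro t ht
        have ht0 : (0:ℝ) < t := h0.trans ht.1
        rw [Real.norm_eq_abs, abs_of_nonneg (by positivity)]
        exact pow_le_pow_left₀ ht0.le ht.2.le _
      have h' : Integrable (fun t => a t * t ^ (m + 1)) (volume.restrict (Ioo x₀ x₁)) := by
        simpa [mul_comm] using this
      simpa [mul_div_assoc] using h'.div_const ((m : ℝ) + 1)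
    rw [integral_sub hi1 hi2, integral_mul_const, haS0]
    have : ∫ t in Ioo x₀ x₁, a t * t ^ (m + 1) / (m + 1)
        = (∫ t in Ioo x₀ x₁, a t * t ^ (m + 1)) / (m + 1) := by
      simp [integral_div]
    rw [this, hmomS (m + 1) hβ]
    simp
end

section
/- Let 0 < p ≤ 1 and s ∈ ℕ with s ≥ 1. If a is a (p,∞,s)-atom with supp a ⊆ (x₀,x₁), 0 < x₀ < x₁, ‖a‖_{L^∞} ≤ (∫_{x₀}^{x₁} x^p dx)^{-1/p}, and ∫ a(x) x^β dx = 0 for β = 0,…,s, then |H*a(x)| < (1+p)^{1/p}(x₁-x₀)^{-1/p} for all x ∈ (x₀,x₁), where H*a(x) = ∫ₓ^∞ a(t)dt. -/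
open MeasureTheory Set

theorem dualHardyOp_pointwise_bound_weighted_infty_atom (p : ℝ) (s : ℕ)
    (hp0 : 0 < p) (hp1 : p ≤ 1) (hs : 1 ≤ s)
    (x₀ x₁ : ℝ) (h0 : 0 < x₀) (h01 : x₀ < x₁) (a : ℝ → ℝ)
    (hsupp : ∀ x, x ∉ Ioo x₀ x₁ → a x = 0)
    (hmem : MemLp a ⊤ (volume.restrict (Ioi (0:ℝ))))
    (hsize : eLpNorm a ⊤ (volume.restrict (Ioi (0:ℝ)))
        ≤ ENNReal.ofReal ((∫ x in x₀..x₁, x ^ p) ^ (-(1/p))))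
    (hint : IntegrableOn a (Ioi (0:ℝ)))
    (hmom : ∀ β : ℕ, β ≤ s → ∫ t in Ioi (0:ℝ), a t * t ^ β = 0) :
    ∀ x ∈ Ioo x₀ x₁, |dualHardyOp a x| < (1 + p) ^ (1/p) * (x₁ - x₀) ^ (-(1/p)) := by
  intro x hx
  obtain ⟨hx0, hx1⟩ := hx
  set d : ℝ := x₁ - x₀ with hd_def
  have hd : 0 < d := by simp [hd_def]; linarith
  set A : ℝ := x₁ ^ (p + 1) - x₀ ^ (p + 1) with hA_def
  -- the integral
  have hI : (∫ x in x₀..x₁, x ^ p) = A / (p + 1) := by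
    rw [integral_rpow (Or.inl (by linarith))]
  have hp1' : (0:ℝ) < p + 1 := by linarith
  -- strict superadditivity: d ^ (p+1) < A
  have hdq : d ^ (p + 1) < A := by
    have hx₁ : x₁ = d + x₀ := by simp [hd_def]
    have hsum : (d + x₀) ^ (p + 1) > d ^ (p + 1) + x₀ ^ (p + 1) := by
      have hdx : (0:ℝ) < d + x₀ := by linarith
      have h1 : (d + x₀) ^ (p + 1) = (d + x₀) * (d + x₀) ^ p := by
        rw [add_comm p 1, Real.rpow_add hdx, Real.rpow_one]
      have h2 : d ^ (p + 1) = d * d ^ p := by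
        rw [add_comm p 1, Real.rpow_add hd, Real.rpow_one]
      have h3 : x₀ ^ (p + 1) = x₀ * x₀ ^ p := by
        rw [add_comm p 1, Real.rpow_add h0, Real.rpow_one]
      have hb1 : d * d ^ p < d * (d + x₀) ^ p :=
        mul_lt_mul_of_pos_left (Real.rpow_lt_rpow hd.le (by linarith) hp0) hd
      have hb2 : x₀ * x₀ ^ p < x₀ * (d + x₀) ^ p :=
        mul_lt_mul_of_pos_left (Real.rpow_lt_rpow h0.le (by linarith) hp0) h0
      rw [h1, h2, h3]
      nlinarith
    rw [hA_def, hx₁]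
    have : (0:ℝ) < x₀ ^ (p + 1) := Real.rpow_pos_of_pos h0 _
    linarith
  have hA : 0 < A := lt_trans (Real.rpow_pos_of_pos hd _) hdq
  -- the essential sup bound, as a real bound a.e.
  set M : ℝ := (A / (p + 1)) ^ (-(1/p)) with hM_def
  have hM : 0 < M := Real.rpow_pos_of_pos (div_pos hA hp1') _
  have hae : ∀ᵐ t ∂(volume.restrict (Ioi (0:ℝ))), ‖a t‖ ≤ M := by
    have h1 := enorm_ae_le_eLpNormEssSup a (volume.restrict (Ioi (0:ℝ)))
    rw [eLpNorm_exponent_top, hI] at hsize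
    filter_upwards [h1] with t ht
    have h2 : ‖a t‖ₑ ≤ ENNReal.ofReal M := le_trans ht hsize
    rw [← ofReal_norm] at h2
    exact (ENNReal.ofReal_le_ofReal_iff hM.le).mp h2
  have haeI : ∀ᵐ t ∂(volume.restrict (Ioo x x₁)), ‖a t‖ ≤ M :=
    ae_restrict_of_ae_restrict_of_subset (fun t ht => lt_trans (lt_trans h0 hx0) ht.1) hae
  -- rewrite the integral over Ioi x as over Ioo x x₁
  have hind : (Ioo x₀ x₁).indicator a = a :=
    Set.indicator_eq_self.mpr (fun t ht => by
      by_contra hc; exact ht (hsupp t hc))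
  have hset : Ioi x ∩ Ioo x₀ x₁ = Ioo x x₁ := by
    ext t
    simp only [mem_inter_iff, mem_Ioi, mem_Ioo]
    constructor
    · rintro ⟨h1, _, h3⟩; exact ⟨h1, h3⟩
    · rintro ⟨h1, h2⟩; exact ⟨h1, lt_trans hx0 h1, h2⟩
  have hIoi : dualHardyOp a x = ∫ t in Ioo x x₁, a t := by
    rw [dualHardyOp, ← hind, setIntegral_indicator measurableSet_Ioo, hset, hind]
  -- bound
  have hbound : |dualHardyOp a x| ≤ M * (x₁ - x) := by
    rw [hIoi, ← Real.norm_eq_abs]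
    have := norm_setIntegral_le_of_norm_le_const_ae (measure_Ioo_lt_top) haeI
      (f := a) (μ := volume)
    rwa [Real.volume_real_Ioo_of_le (by linarith)] at this
  -- final strict comparison
  have hM_eq : M = (p + 1) ^ (1/p) * A ^ (-(1/p)) := by
    rw [hM_def, Real.rpow_neg (div_nonneg hA.le hp1'.le), Real.div_rpow hA.le hp1'.le]
    rw [Real.rpow_neg hA.le]
    field_simp
  have hkey : M * d < (1 + p) ^ (1/p) * d ^ (-(1/p)) := by
    have h1 : A ^ (-(1/p)) < (d ^ (p+1)) ^ (-(1/p)) :=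
      Real.rpow_lt_rpow_of_neg (Real.rpow_pos_of_pos hd _) hdq
        (by rw [neg_lt, neg_zero]; positivity)
    have h2 : d * (d ^ (p+1)) ^ (-(1/p)) = d ^ (-(1/p)) := by
      nth_rewrite 1 [← Real.rpow_one d]
      rw [← Real.rpow_mul hd.le, ← Real.rpow_add hd]
      congr 1
      field_simp
      ring
    have h3 : M * d < (p + 1) ^ (1/p) * (d * (d ^ (p+1)) ^ (-(1/p)))  := by
      rw [hM_eq]
      have hq : (0:ℝ) < (p + 1) ^ (1/p) := Real.rpow_pos_of_pos hp1' _
      calc (p + 1) ^ (1/p) * A ^ (-(1/p)) * d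
          = (p + 1) ^ (1/p) * (A ^ (-(1/p)) * d) := by ring
        _ < (p + 1) ^ (1/p) * ((d ^ (p+1)) ^ (-(1/p)) * d) :=
            mul_lt_mul_of_pos_left (mul_lt_mul_of_pos_right h1 hd) hq
        _ = (p + 1) ^ (1/p) * (d * (d ^ (p+1)) ^ (-(1/p))) := by ring
    rw [h2] at h3
    rwa [add_comm p 1] at h3
  calc |dualHardyOp a x| ≤ M * (x₁ - x) := hbound
    _ ≤ M * d := by
        apply mul_le_mul_of_nonneg_left _ hM.le
        simp [hd_def]; linarith
    _ < (1 + p) ^ (1/p) * d ^ (-(1/p)) := hkey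
end
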